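/- arXiv:1405.1513 — 9 statements merged into one kernel-verified Lean document; each statement's English description precedes it below -/
import Mathlib

section
/- Let p and q be probability mass functions on the same countable alphabet A, and suppose c = ∑_{a∈A} p(a)·q(a) < 1. Define ρ(a) = p(a)·(1−q(a))/(1−c) and ν(a) = q(a)·(1−p(a))/(1−c). Then ρ and ν are probability mass functions on A, and the total variation distance factorizes as ‖p,q‖ = (1−c)·‖ρ,ν‖. -/
/-!
The unnormalised weights `p (1 - q)` and `q (1 - p)` both have total mass `1 - c`, and pointwise
`min (p (1 - q)) (q (1 - p)) = min p q - p q`. Summing, the similarity of `ρ` and `ν` is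
`(⟨p,q⟩ - c) / (1 - c)`, so `1 - ⟨p,q⟩ = (1 - c) (1 - ⟨ρ,ν⟩)`.
-/

/-- Total variation distance between two pmfs: `1 - ∑ min`. -/
noncomputable def tv {A : Type*} (p q : A → ℝ) : ℝ := 1 - ∑' a, min (p a) (q a)

lemma min_mul_one_sub_mul_one_sub (x y : ℝ) :
    min (x * (1 - y)) (y * (1 - x)) = min x y - x * y := by
  rw [mul_one_sub, mul_one_sub, mul_comm y x, min_sub_sub_right]

section

variable {A : Type*} {p q : A → ℝ}

lemma le_one_of_hasSum_one (hp0 : ∀ a, 0 ≤ p a) (hp1 : HasSum p 1) (a : A) : p a ≤ 1 :=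
  le_hasSum hp1 a fun b _ => hp0 b

lemma summable_mul_of_le_one (hp : Summable p) (hp0 : ∀ a, 0 ≤ p a)
    (hq0 : ∀ a, 0 ≤ q a) (hq1 : ∀ a, q a ≤ 1) : Summable fun a => p a * q a :=
  hp.of_nonneg_of_le (fun a => mul_nonneg (hp0 a) (hq0 a))
    fun a => mul_le_of_le_one_right (hp0 a) (hq1 a)

lemma hasSum_mul_one_sub_div {c : ℝ} (hp1 : HasSum p 1) (hpq : HasSum (fun a => p a * q a) c)
    (hc : c ≠ 1) : HasSum (fun a => p a * (1 - q a) / (1 - c)) 1 := by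
  have h := (hp1.sub hpq).div_const (1 - c)
  rw [div_self (sub_ne_zero.2 hc.symm)] at h
  simpa only [mul_one_sub] using h

lemma tv_eq_one_sub_mul_tv {c : ℝ} (hp : Summable p) (hp0 : ∀ a, 0 ≤ p a) (hq0 : ∀ a, 0 ≤ q a)
    (hpq : HasSum (fun a => p a * q a) c) (hc : c < 1) :
    tv p q = (1 - c) *
      tv (fun a => p a * (1 - q a) / (1 - c)) (fun a => q a * (1 - p a) / (1 - c)) := by
  have hd : 0 < 1 - c := sub_pos.2 hc
  have hmin : Summable fun a => min (p a) (q a) :=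
    hp.of_nonneg_of_le (fun a => le_min (hp0 a) (hq0 a)) fun a => min_le_left _ _
  unfold tv
  simp_rw [min_div_div_right hd.le, min_mul_one_sub_mul_one_sub]
  rw [tsum_div_const, hmin.tsum_sub hpq.summable, hpq.tsum_eq]
  field_simp
  ring

end

theorem stmt0_general {A : Type*} (p q : A → ℝ)
    (hp0 : ∀ a, 0 ≤ p a) (hp1 : HasSum p 1)
    (hq0 : ∀ a, 0 ≤ q a) (hq1 : HasSum q 1)
    (c : ℝ) (hc : c = ∑' a, p a * q a) (hc1 : c < 1)
    (ρ ν : A → ℝ)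
    (hρ : ∀ a, ρ a = p a * (1 - q a) / (1 - c))
    (hν : ∀ a, ν a = q a * (1 - p a) / (1 - c)) :
    (∀ a, 0 ≤ ρ a) ∧ HasSum ρ 1 ∧ (∀ a, 0 ≤ ν a) ∧ HasSum ν 1 ∧
      tv p q = (1 - c) * tv ρ ν := by
  have hple := le_one_of_hasSum_one hp0 hp1
  have hqle := le_one_of_hasSum_one hq0 hq1
  have hpq : HasSum (fun a => p a * q a) c :=
    hc ▸ (summable_mul_of_le_one hp1.summable hp0 hq0 hqle).hasSum
  have hqp : HasSum (fun a => q a * p a) c := by simpa only [mul_comm] using hpq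
  have hd : 0 ≤ 1 - c := sub_nonneg.2 hc1.le
  obtain rfl : ρ = _ := funext hρ
  obtain rfl : ν = _ := funext hν
  exact ⟨fun a => div_nonneg (mul_nonneg (hp0 a) (sub_nonneg.2 (hqle a))) hd,
    hasSum_mul_one_sub_div hp1 hpq hc1.ne,
    fun a => div_nonneg (mul_nonneg (hq0 a) (sub_nonneg.2 (hple a))) hd,
    hasSum_mul_one_sub_div hq1 hqp hc1.ne,
    tv_eq_one_sub_mul_tv hp1.summable hp0 hq0 hpq hc1⟩

/-- one step of the factorization of total variation distance. -/
theorem stmt0 {A : Type*} [Countable A] (p q : A → ℝ)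
    (hp0 : ∀ a, 0 ≤ p a) (hp1 : HasSum p 1)
    (hq0 : ∀ a, 0 ≤ q a) (hq1 : HasSum q 1)
    (c : ℝ) (hc : c = ∑' a, p a * q a) (hc1 : c < 1)
    (ρ ν : A → ℝ)
    (hρ : ∀ a, ρ a = p a * (1 - q a) / (1 - c))
    (hν : ∀ a, ν a = q a * (1 - p a) / (1 - c)) :
    (∀ a, 0 ≤ ρ a) ∧ HasSum ρ 1 ∧ (∀ a, 0 ≤ ν a) ∧ HasSum ν 1 ∧
      tv p q = (1 - c) * tv ρ ν :=
  stmt0_general p q hp0 hp1 hq0 hq1 c hc hc1 ρ ν hρ hν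
end

section
/- Let μ be a joint probability mass function on 𝒳 × 𝒴 for countable alphabets 𝒳, 𝒴, with marginals μ_X and μ_Y. For any y ∈ 𝒴 with μ_Y(y) > 0, the information about X contained in the event Y = y satisfies 𝔍_X(y) ≤ 𝔍_Y(y), i.e., the total variation distance between μ_X and the conditional pmf x ↦ μ(x,y)/μ_Y(y) is at most 1 − μ_Y(y). -/
/-- the information about `X` contained in the event `Y = y`
is at most the information the event carries about `Y` itself, i.e.
`‖μ_X, μ_{X|Y=y}‖ ≤ 1 - μ_Y(y)`. -/
theorem stmt1 {X Y : Type*} [Countable X] [Countable Y] (μ : X × Y → ℝ)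
    (h0 : ∀ p, 0 ≤ μ p) (h1 : HasSum μ 1)
    (μX : X → ℝ) (hμX : ∀ x, μX x = ∑' y, μ (x, y))
    (μY : Y → ℝ) (hμY : ∀ y, μY y = ∑' x, μ (x, y))
    (y : Y) (hy : 0 < μY y) :
    tv μX (fun x => μ (x, y) / μY y) ≤ 1 - μY y := by
  have hsum : Summable μ := h1.summable
  have hrow : Summable (fun x => μ (x, y)) :=
    hsum.comp_injective (i := fun x : X => (x, y)) (fun a b h => (Prod.ext_iff.mp h).1)
  have hcol : ∀ x, Summable (fun y' => μ (x, y')) := fun x =>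
    hsum.comp_injective (i := fun y' : Y => (x, y')) (fun a b h => (Prod.ext_iff.mp h).2)
  have hY1 : μY y ≤ 1 := by
    rw [hμY, ← h1.tsum_eq]
    exact Summable.tsum_le_tsum_of_inj (fun x : X => (x, y))
      (fun a b h => (Prod.ext_iff.mp h).1)
      (fun c _ => h0 c) (fun b => le_rfl) hrow hsum
  have hle1 : ∀ x, μ (x, y) ≤ μX x := fun x => by
    rw [hμX]
    exact Summable.le_tsum (hcol x) y (fun y' _ => h0 _)
  have hle2 : ∀ x, μ (x, y) ≤ μ (x, y) / μY y := fun x => by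
    rw [le_div_iff₀ hy]
    exact mul_le_of_le_one_right (h0 _) hY1
  have hmin : Summable (fun x => min (μX x) (μ (x, y) / μY y)) := by
    apply Summable.of_nonneg_of_le
      (fun x => le_min ((h0 _).trans (hle1 x)) (div_nonneg (h0 _) hy.le))
      (fun x => min_le_right _ _) (hrow.div_const _)
  have key : μY y ≤ ∑' x, min (μX x) (μ (x, y) / μY y) := by
    nth_rewrite 1 [hμY]
    exact Summable.tsum_le_tsum (fun x => le_min (hle1 x) (hle2 x)) hrow hmin
  rw [tv]; linarith [key]
end

section
/- Let μ be a joint probability mass function on 𝒜 × ℬ × 𝒞 for countable alphabets 𝒜, ℬ, 𝒞 that forms a Markov chain A → B → C, i.e., μ(a,b,c)·μ_B(b) = μ_{AB}(a,b)·μ_{BC}(b,c) for all a, b, c. Then the mutual affinity of A with the pair (B,C) equals the mutual affinity of A with B alone: ‖μ_A ⊗ μ_{BC}, μ‖ = ‖μ_A ⊗ μ_B, μ_{AB}‖. -/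
/-!
Conditioning on `B`, the Markov property says `μ(a,b,c) = μ_{BC}(b,c)/μ_B(b) · μ_{AB}(a,b)`, while
`μ_A(a) μ_{BC}(b,c) = μ_{BC}(b,c)/μ_B(b) · μ_A(a) μ_B(b)`. Hence on every fibre `(a,b)` the summand
`min(μ_A μ_{BC}, μ)` is the nonnegative weight `μ_{BC}(b,·)/μ_B(b)`, of total mass one, times
`min(μ_A μ_B, μ_{AB})(a,b)`, and summing over `c` first gives the two-variable similarity.
Fibres with `μ_B(b) = 0` carry no mass and contribute nothing on either side.
-/

/-- The hypothesis on `|f|` makes `f` and `g` summable together, so the identity also holds when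
both sides are the junk value `0`. -/
theorem tsum_prod_eq_of_hasSum_fiber {α β : Type*} {f : α × β → ℝ} {g : α → ℝ}
    (hf : ∀ x, HasSum (fun y => f (x, y)) (g x))
    (hf_abs : ∀ x, HasSum (fun y => |f (x, y)|) |g x|) :
    ∑' p, f p = ∑' x, g x := by
  have summable_iff : Summable f ↔ Summable g := by
    rw [← summable_abs_iff, summable_prod_of_nonneg fun _ => abs_nonneg _]
    simp only [fun x => (hf_abs x).tsum_eq, fun x => (hf_abs x).summable, implies_true, true_and]
    exact summable_abs_iff
  by_cases hg : Summable g
  · rw [(summable_iff.2 hg).tsum_prod]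
    exact tsum_congr fun x => (hf x).tsum_eq
  · rw [tsum_eq_zero_of_not_summable hg, tsum_eq_zero_of_not_summable (mt summable_iff.1 hg)]

theorem tsum_prod_mul_eq_of_hasSum_one {α β : Type*} (w : α → β → ℝ) (g : α → ℝ)
    (hw_nonneg : ∀ x y, 0 ≤ w x y) (hw : ∀ x, g x ≠ 0 → HasSum (w x) 1) :
    ∑' p : α × β, w p.1 p.2 * g p.1 = ∑' x, g x := by
  refine tsum_prod_eq_of_hasSum_fiber (fun x => ?_) (fun x => ?_)
  all_goals
    rcases eq_or_ne (g x) 0 with hx | hx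
    · simp [hx]
  · simpa using (hw x hx).mul_right (g x)
  · simpa [abs_mul, abs_of_nonneg (hw_nonneg x _)] using (hw x hx).mul_right |g x|

section MarkovChain

variable {A B C : Type*} {μ : A × B × C → ℝ} {μB : B → ℝ} {μAB : A × B → ℝ} {μBC : B × C → ℝ}

theorem hasSum_marginal_left (hμ : Summable μ) (hBC : ∀ b c, μBC (b, c) = ∑' a, μ (a, b, c))
    (b : B) (c : C) : HasSum (fun a => μ (a, b, c)) (μBC (b, c)) := by
  rw [hBC]
  exact (hμ.comp_injective (i := fun a : A => (a, b, c)) fun _ _ h => (Prod.ext_iff.1 h).1).hasSum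

theorem hasSum_marginal_middle (hμ : Summable μ)
    (hB : ∀ b, μB b = ∑' ac : A × C, μ (ac.1, b, ac.2))
    (hBC : ∀ b c, μBC (b, c) = ∑' a, μ (a, b, c)) (b : B) :
    HasSum (fun c => μBC (b, c)) (μB b) := by
  have hfibre : Summable fun ca : C × A => μ (ca.2, b, ca.1) :=
    hμ.comp_injective fun x y h => by
      simp only [Prod.mk.injEq] at h
      exact Prod.ext h.2.2 h.1
  convert hfibre.hasSum.prod_fiberwise fun c => hasSum_marginal_left hμ hBC b c using 1
  rw [hB, ← (Equiv.prodComm C A).tsum_eq]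
  rfl

theorem eq_zero_of_marginal_middle_eq_zero (h0 : ∀ p, 0 ≤ μ p) (hμ : Summable μ)
    (hB : ∀ b, μB b = ∑' ac : A × C, μ (ac.1, b, ac.2))
    (hBC : ∀ b c, μBC (b, c) = ∑' a, μ (a, b, c)) {b : B} (hb : μB b = 0) (a : A) (c : C) :
    μ (a, b, c) = 0 := by
  have hBC_nonneg : ∀ c, 0 ≤ μBC (b, c) := fun c =>
    (hasSum_marginal_left hμ hBC b c).nonneg fun _ => h0 _
  refine le_antisymm ?_ (h0 _)
  calc μ (a, b, c) ≤ μBC (b, c) := le_hasSum (hasSum_marginal_left hμ hBC b c) a fun _ _ => h0 _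
    _ ≤ μB b := le_hasSum (hasSum_marginal_middle hμ hB hBC b) c fun _ _ => hBC_nonneg _
    _ = 0 := hb

theorem div_marginal_middle_nonneg (h0 : ∀ p, 0 ≤ μ p) (hμ : Summable μ)
    (hB : ∀ b, μB b = ∑' ac : A × C, μ (ac.1, b, ac.2))
    (hBC : ∀ b c, μBC (b, c) = ∑' a, μ (a, b, c)) (b : B) (c : C) : 0 ≤ μBC (b, c) / μB b := by
  have hBC_nonneg : ∀ c, 0 ≤ μBC (b, c) := fun c =>
    (hasSum_marginal_left hμ hBC b c).nonneg fun _ => h0 _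
  exact div_nonneg (hBC_nonneg c) ((hasSum_marginal_middle hμ hB hBC b).nonneg hBC_nonneg)

theorem min_mul_marginal_eq_div_mul_min (h0 : ∀ p, 0 ≤ μ p) (hμ : Summable μ)
    (hB : ∀ b, μB b = ∑' ac : A × C, μ (ac.1, b, ac.2))
    (hBC : ∀ b c, μBC (b, c) = ∑' a, μ (a, b, c))
    (hMarkov : ∀ a b c, μ (a, b, c) * μB b = μAB (a, b) * μBC (b, c)) (x : ℝ) (a : A) (b : B)
    (c : C) : min (x * μBC (b, c)) (μ (a, b, c)) = μBC (b, c) / μB b * min (x * μB b) (μAB (a, b)) := by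
  rcases eq_or_ne (μB b) 0 with hb | hb
  · have hμ_zero := eq_zero_of_marginal_middle_eq_zero h0 hμ hB hBC hb
    have hBC_zero : μBC (b, c) = 0 := by simp [hBC, hμ_zero]
    simp [hb, hBC_zero, hμ_zero]
  · have hμ_eq : μ (a, b, c) = μBC (b, c) / μB b * μAB (a, b) := by
      field_simp
      linarith [hMarkov a b c]
    rw [hμ_eq, mul_min_of_nonneg _ _ (div_marginal_middle_nonneg h0 hμ hB hBC b c)]
    field_simp

theorem hasSum_div_marginal_middle_of_min_ne_zero (h0 : ∀ p, 0 ≤ μ p) (hμ : Summable μ)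
    (hB : ∀ b, μB b = ∑' ac : A × C, μ (ac.1, b, ac.2))
    (hAB : ∀ a b, μAB (a, b) = ∑' c, μ (a, b, c))
    (hBC : ∀ b c, μBC (b, c) = ∑' a, μ (a, b, c)) (x : ℝ) (a : A) (b : B)
    (hmin : min (x * μB b) (μAB (a, b)) ≠ 0) : HasSum (fun c => μBC (b, c) / μB b) 1 := by
  have hb : μB b ≠ 0 := by
    rintro hb
    have hAB_zero : μAB (a, b) = 0 := by
      simp [hAB, eq_zero_of_marginal_middle_eq_zero h0 hμ hB hBC hb]
    simp [hb, hAB_zero] at hmin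
  simpa [div_self hb] using (hasSum_marginal_middle hμ hB hBC b).div_const (μB b)

end MarkovChain

theorem stmt5_general {A B C : Type*}
    (μ : A × B × C → ℝ) (h0 : ∀ p, 0 ≤ μ p) (h1 : HasSum μ 1)
    (μA : A → ℝ)
    (μB : B → ℝ) (hB : ∀ b, μB b = ∑' ac : A × C, μ (ac.1, b, ac.2))
    (μAB : A × B → ℝ) (hAB : ∀ a b, μAB (a, b) = ∑' c, μ (a, b, c))
    (μBC : B × C → ℝ) (hBC : ∀ b c, μBC (b, c) = ∑' a, μ (a, b, c))
    (hMarkov : ∀ a b c, μ (a, b, c) * μB b = μAB (a, b) * μBC (b, c)) :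
    tv (fun p : A × B × C => μA p.1 * μBC p.2) μ =
      tv (fun p : A × B => μA p.1 * μB p.2) μAB := by
  have hμ := h1.summable
  unfold tv
  congr 1
  rw [← (Equiv.prodAssoc A B C).tsum_eq]
  simp only [Equiv.prodAssoc_apply, min_mul_marginal_eq_div_mul_min h0 hμ hB hBC hMarkov]
  exact tsum_prod_mul_eq_of_hasSum_one (fun ab c => μBC (ab.2, c) / μB ab.2)
    (fun ab => min (μA ab.1 * μB ab.2) (μAB ab))
    (fun ab => div_marginal_middle_nonneg h0 hμ hB hBC ab.2)
    (fun ab => hasSum_div_marginal_middle_of_min_ne_zero h0 hμ hB hAB hBC _ ab.1 ab.2)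

/-- if `A → B → C` is a Markov chain, then the mutual affinity
of `A` with the pair `(B,C)` equals the mutual affinity of `A` with `B`. -/
theorem stmt5 {A B C : Type*} [Countable A] [Countable B] [Countable C]
    (μ : A × B × C → ℝ) (h0 : ∀ p, 0 ≤ μ p) (h1 : HasSum μ 1)
    (μA : A → ℝ) (hA : ∀ a, μA a = ∑' bc : B × C, μ (a, bc))
    (μB : B → ℝ) (hB : ∀ b, μB b = ∑' ac : A × C, μ (ac.1, b, ac.2))
    (μAB : A × B → ℝ) (hAB : ∀ a b, μAB (a, b) = ∑' c, μ (a, b, c))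
    (μBC : B × C → ℝ) (hBC : ∀ b c, μBC (b, c) = ∑' a, μ (a, b, c))
    (hMarkov : ∀ a b c, μ (a, b, c) * μB b = μAB (a, b) * μBC (b, c)) :
    tv (fun p : A × B × C => μA p.1 * μBC p.2) μ =
      tv (fun p : A × B => μA p.1 * μB p.2) μAB :=
  stmt5_general μ h0 h1 μA μB hB μAB hAB μBC hBC hMarkov
end

section
/- (Information can't hurt.) Let μ be any joint probability mass function on 𝒜 × ℬ × 𝒞 for countable alphabets 𝒜, ℬ, 𝒞. Then the mutual affinity of A with the pair (B,C) is at least the mutual affinity of A with B alone: ‖μ_A ⊗ μ_{BC}, μ‖ ≥ ‖μ_A ⊗ μ_B, μ_{AB}‖. -/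
/-- Information can't hurt: the mutual affinity of `A` with the
pair `(B,C)` is at least the mutual affinity of `A` with `B` alone. -/
theorem stmt6 {A B C : Type*} [Countable A] [Countable B] [Countable C]
    (μ : A × B × C → ℝ) (h0 : ∀ p, 0 ≤ μ p) (h1 : HasSum μ 1)
    (μA : A → ℝ) (hA : ∀ a, μA a = ∑' bc : B × C, μ (a, bc))
    (μB : B → ℝ) (hB : ∀ b, μB b = ∑' ac : A × C, μ (ac.1, b, ac.2))
    (μAB : A × B → ℝ) (hAB : ∀ a b, μAB (a, b) = ∑' c, μ (a, b, c))
    (μBC : B × C → ℝ) (hBC : ∀ b c, μBC (b, c) = ∑' a, μ (a, b, c)) :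
    tv (fun p : A × B × C => μA p.1 * μBC p.2) μ ≥
      tv (fun p : A × B => μA p.1 * μB p.2) μAB := by
  classical
  have hμsum : Summable μ := h1.summable
  -- nonnegativity of marginals
  have hμA0 : ∀ a, 0 ≤ μA a := fun a => (hA a) ▸ tsum_nonneg (fun bc => h0 _)
  have hμB0 : ∀ b, 0 ≤ μB b := fun b => (hB b) ▸ tsum_nonneg (fun ac => h0 _)
  have hμAB0 : ∀ p : A × B, 0 ≤ μAB p := fun p => (hAB p.1 p.2) ▸ tsum_nonneg (fun c => h0 _)
  have hμBC0 : ∀ p : B × C, 0 ≤ μBC p := fun p => (hBC p.1 p.2) ▸ tsum_nonneg (fun a => h0 _)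
  -- sections of μ are summable
  have hsecA : ∀ a, Summable (fun bc : B × C => μ (a, bc)) := fun a =>
    hμsum.comp_injective (f := μ) (i := fun bc : B × C => (a, bc))
      (by intro x y h; simpa using h)
  have hsecAB : ∀ a b, Summable (fun c : C => μ (a, b, c)) := fun a b =>
    (hsecA a).comp_injective (i := fun c : C => (b, c)) (by intro x y h; simpa using h)
  -- summability of μAB
  have hν : Summable (fun p : (A × B) × C => μ (p.1.1, p.1.2, p.2)) := by
    have := ((Equiv.prodAssoc A B C).summable_iff (f := μ)).mpr hμsum
    exact this
  have hμABsum : Summable μAB := by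
    have h2 := ((summable_prod_of_nonneg (f := fun p : (A × B) × C => μ (p.1.1, p.1.2, p.2))
      (fun p => h0 _)).mp hν).2
    exact h2.congr (fun ab => (hAB ab.1 ab.2).symm)
  -- summability of μBC
  have hν2 : Summable (fun p : (B × C) × A => μ (p.2, p.1)) := by
    have := ((Equiv.prodComm (B × C) A).summable_iff (f := μ)).mpr hμsum
    exact this
  have hμBCsum : Summable μBC := by
    have h2 := ((summable_prod_of_nonneg (f := fun p : (B × C) × A => μ (p.2, p.1))
      (fun p => h0 _)).mp hν2).2
    exact h2.congr (fun bc => (hBC bc.1 bc.2).symm)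
  have hμBCsec : ∀ b, Summable (fun c => μBC (b, c)) := fun b =>
    hμBCsum.comp_injective (i := fun c : C => (b, c)) (by intro x y h; simpa using h)
  -- the C-marginal of μBC is μB
  have hBsum : ∀ b, (∑' c, μBC (b, c)) = μB b := by
    intro b
    have hsecCA : ∀ c, Summable (fun a : A => μ (a, b, c)) := fun c =>
      hμsum.comp_injective (i := fun a : A => (a, b, c))
        (by intro x y h; simpa using h)
    have hg : Summable (fun ca : C × A => μ (ca.2, b, ca.1)) :=
      hμsum.comp_injective (i := fun ca : C × A => (ca.2, b, ca.1))
        (by intro x y h; simp only [Prod.mk.injEq, true_and] at h; exact Prod.ext h.2 h.1)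
    calc ∑' c, μBC (b, c) = ∑' c, ∑' a, μ (a, b, c) := tsum_congr (fun c => hBC b c)
      _ = ∑' ca : C × A, μ (ca.2, b, ca.1) := (Summable.tsum_prod' hg (fun c => hsecCA c)).symm
      _ = ∑' ac : A × C, μ (ac.1, b, ac.2) :=
        ((Equiv.prodComm C A).tsum_eq (fun ac : A × C => μ (ac.1, b, ac.2)))
      _ = μB b := (hB b).symm
  -- the functions we compare
  set F : A × B × C → ℝ := fun p => min (μA p.1 * μBC p.2) (μ p) with hFdef
  set G : A × B → ℝ := fun p => min (μA p.1 * μB p.2) (μAB p) with hGdef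
  have hF0 : ∀ p, 0 ≤ F p := fun p => le_min (mul_nonneg (hμA0 _) (hμBC0 _)) (h0 p)
  have hG0 : ∀ p, 0 ≤ G p := fun p => le_min (mul_nonneg (hμA0 _) (hμB0 _)) (hμAB0 p)
  have hFsum : Summable F := hμsum.of_nonneg_of_le hF0 (fun p => min_le_right _ _)
  have hGsum : Summable G := hμABsum.of_nonneg_of_le hG0 (fun p => min_le_right _ _)
  have hFsecA : ∀ a, Summable (fun bc : B × C => F (a, bc)) := fun a =>
    hFsum.comp_injective (i := fun bc : B × C => (a, bc)) (by intro x y h; simpa using h)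
  have hFsecAB : ∀ a b, Summable (fun c : C => F (a, b, c)) := fun a b =>
    (hFsecA a).comp_injective (i := fun c : C => (b, c)) (by intro x y h; simpa using h)
  have hGsecA : ∀ a, Summable (fun b : B => G (a, b)) := fun a =>
    hGsum.comp_injective (i := fun b : B => (a, b)) (by intro x y h; simpa using h)
  -- key pointwise bound
  have key : ∀ a b, (∑' c, F (a, b, c)) ≤ G (a, b) := by
    intro a b
    refine le_min ?_ ?_
    · calc (∑' c, F (a, b, c)) ≤ ∑' c, μA a * μBC (b, c) :=
            Summable.tsum_le_tsum (fun c => min_le_left _ _) (hFsecAB a b) ((hμBCsec b).mul_left _)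
        _ = μA a * ∑' c, μBC (b, c) := tsum_mul_left
        _ = μA a * μB b := by rw [hBsum b]
    · calc (∑' c, F (a, b, c)) ≤ ∑' c, μ (a, b, c) :=
            Summable.tsum_le_tsum (fun c => min_le_right _ _) (hFsecAB a b) (hsecAB a b)
        _ = μAB (a, b) := (hAB a b).symm
  -- summability of intermediate sums
  have hFsumB : ∀ a, Summable (fun b : B => ∑' c, F (a, b, c)) := fun a =>
    (hGsecA a).of_nonneg_of_le (fun b => tsum_nonneg (fun c => hF0 _)) (key a)
  have hGsumA : Summable (fun a : A => ∑' b, G (a, b)) :=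
    ((summable_prod_of_nonneg hG0).mp hGsum).2
  have hFsumA : Summable (fun a : A => ∑' b, ∑' c, F (a, b, c)) := by
    have h2 := ((summable_prod_of_nonneg hF0).mp hFsum).2
    refine h2.congr (fun a => ?_)
    exact Summable.tsum_prod' (hFsecA a) (hFsecAB a)
  -- conclude
  have main : (∑' p : A × B × C, F p) ≤ ∑' p : A × B, G p := by
    calc (∑' p : A × B × C, F p) = ∑' a, ∑' bc : B × C, F (a, bc) := Summable.tsum_prod' hFsum hFsecA
      _ = ∑' a, ∑' b, ∑' c, F (a, b, c) := tsum_congr (fun a => Summable.tsum_prod' (hFsecA a) (hFsecAB a))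
      _ ≤ ∑' a, ∑' b, G (a, b) := by
          refine Summable.tsum_le_tsum (fun a => ?_) hFsumA hGsumA
          exact Summable.tsum_le_tsum (fun b => key a b) (hFsumB a) (hGsecA a)
      _ = ∑' p : A × B, G p := (Summable.tsum_prod' hGsum hGsecA).symm
  simp only [tv, ge_iff_le]
  linarith [main]
end

section
/- (Data processing inequality for mutual affinity.) Let μ be a joint probability mass function on 𝒵 × ℋ₁ × ℋ₂ for countable alphabets that forms a Markov chain Z → H₁ → H₂, i.e., μ(z,h₁,h₂)·μ_{H₁}(h₁) = μ_{Z H₁}(z,h₁)·μ_{H₁H₂}(h₁,h₂) for all z, h₁, h₂. Then the mutual affinities satisfy I(Z,H₁) ≥ I(Z,H₂), i.e., ‖μ_Z ⊗ μ_{H₁}, μ_{Z H₁}‖ ≥ ‖μ_Z ⊗ μ_{H₂}, μ_{Z H₂}‖. -/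
theorem Summable.hasSum_tsum_fiber {T B C : Type*} {f : T → ℝ} (hf : Summable f)
    (e : B × C ≃ T) : HasSum (fun b => ∑' c, f (e (b, c))) (∑' x, f x) := by
  rw [← e.tsum_eq]
  have hfe : Summable (f ∘ e) := e.summable_iff.mpr hf
  exact hfe.hasSum.prod_fiberwise fun b => (hfe.prod_factor b).hasSum

theorem Summable.hasSum_tsum_middle {α β γ : Type*} {f : α × β × γ → ℝ} (hf : Summable f) :
    HasSum (fun p : α × γ => ∑' b, f (p.1, b, p.2)) (∑' x, f x) :=
  hf.hasSum_tsum_fiber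
    ((Equiv.prodAssoc α γ β).trans ((Equiv.refl α).prodCongr (Equiv.prodComm γ β)))

theorem tsum_le_tsum_of_hasSum_fiber {α β γ : Type*} {g : α × β × γ → ℝ} {A : α × β → ℝ}
    {B : α × γ → ℝ} (hg : Summable g) (hA : ∀ p, HasSum (fun c => g (p.1, p.2, c)) (A p))
    (hB : ∀ p, ∑' b, g (p.1, b, p.2) ≤ B p) (hBs : Summable B) :
    ∑' p, A p ≤ ∑' p, B p := by
  have hgA : HasSum A (∑' x, g x) := by
    convert hg.hasSum_tsum_fiber (Equiv.prodAssoc α β γ) using 1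
    exact funext fun p => (hA p).tsum_eq.symm
  exact hgA.tsum_eq.trans_le (hasSum_le hB hg.hasSum_tsum_middle hBs.hasSum)

theorem hasSum_min_mul_of_proportional {γ : Type*} {P f : γ → ℝ} {m q : ℝ} (a : ℝ)
    (hP : HasSum P m) (hf : HasSum f q) (hf0 : ∀ c, 0 ≤ f c) (hfP : ∀ c, f c ≤ P c)
    (hprop : ∀ c, f c * m = q * P c) :
    HasSum (fun c => min (a * P c) (f c)) (min (a * m) q) := by
  have hP0 : ∀ c, 0 ≤ P c := fun c => (hf0 c).trans (hfP c)
  rcases (hP.nonneg hP0).eq_or_lt with rfl | hm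
  · obtain rfl : P = 0 := (hasSum_zero_iff_of_nonneg hP0).mp hP
    obtain rfl : f = 0 := funext fun c => le_antisymm (hfP c) (hf0 c)
    obtain rfl : q = 0 := hf.unique hasSum_zero
    simp
  · have hterm : ∀ c, min (a * P c) (f c) = min (a * m) q * (P c / m) := fun c => by
      rw [min_mul_of_nonneg _ _ (div_nonneg (hP0 c) hm.le)]
      congr 1
      · field_simp
      · rw [← mul_div_assoc, eq_div_iff hm.ne', hprop c]
    simpa [hterm, div_self hm.ne'] using (hP.div_const m).mul_left (min (a * m) q)

theorem tsum_min_le_tsum_min_of_markov {Z H₁ H₂ : Type*} {μ : Z × H₁ × H₂ → ℝ} {μZ : Z → ℝ}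
    {μH₁ : H₁ → ℝ} {μH₂ : H₂ → ℝ} {μZH₁ : Z × H₁ → ℝ} {μZH₂ : Z × H₂ → ℝ}
    {μH₁H₂ : H₁ × H₂ → ℝ} (h0 : ∀ x, 0 ≤ μ x) (hμ : Summable μ) (hμZ : ∀ z, 0 ≤ μZ z)
    (hμH₁H₂ : ∀ x, 0 ≤ μH₁H₂ x) (hμ_le : ∀ z h₁ h₂, μ (z, h₁, h₂) ≤ μH₁H₂ (h₁, h₂))
    (hsumH₁ : ∀ h₁, HasSum (fun h₂ => μH₁H₂ (h₁, h₂)) (μH₁ h₁))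
    (hsumH₂ : ∀ h₂, HasSum (fun h₁ => μH₁H₂ (h₁, h₂)) (μH₂ h₂))
    (hsumZH₁ : ∀ z h₁, HasSum (fun h₂ => μ (z, h₁, h₂)) (μZH₁ (z, h₁)))
    (hsumZH₂ : ∀ z h₂, HasSum (fun h₁ => μ (z, h₁, h₂)) (μZH₂ (z, h₂)))
    (hMarkov : ∀ z h₁ h₂, μ (z, h₁, h₂) * μH₁ h₁ = μZH₁ (z, h₁) * μH₁H₂ (h₁, h₂)) :
    ∑' p, min (μZ p.1 * μH₁ p.2) (μZH₁ p) ≤ ∑' p, min (μZ p.1 * μH₂ p.2) (μZH₂ p) := by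
  set g : Z × H₁ × H₂ → ℝ := fun x => min (μZ x.1 * μH₁H₂ x.2) (μ x)
  have hg : Summable g := .of_nonneg_of_le
    (fun x => le_min (mul_nonneg (hμZ _) (hμH₁H₂ _)) (h0 x)) (fun x => min_le_right _ _) hμ
  have hZH₂s : Summable μZH₂ := by
    rw [show μZH₂ = _ from funext fun p => (hsumZH₂ p.1 p.2).tsum_eq.symm]
    exact hμ.hasSum_tsum_middle.summable
  refine tsum_le_tsum_of_hasSum_fiber hg (fun p => ?_) (fun p => ?_) ?_
  · exact hasSum_min_mul_of_proportional (μZ p.1) (hsumH₁ p.2) (hsumZH₁ p.1 p.2)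
      (fun _ => h0 _) (hμ_le p.1 p.2) (hMarkov p.1 p.2)
  · have hgs := hg.comp_injective (i := fun h₁ => (p.1, h₁, p.2)) fun _ _ h => by
      simp_all [Prod.ext_iff]
    exact le_min (hasSum_le (fun _ => min_le_left _ _) hgs.hasSum ((hsumH₂ p.2).mul_left _))
      (hasSum_le (fun _ => min_le_right _ _) hgs.hasSum (hsumZH₂ p.1 p.2))
  · exact .of_nonneg_of_le (fun p => le_min
      (mul_nonneg (hμZ _) ((hsumH₂ p.2).nonneg fun _ => hμH₁H₂ _))
      ((hsumZH₂ p.1 p.2).nonneg fun _ => h0 _)) (fun p => min_le_right _ _) hZH₂s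

theorem stmt7_general {Z H₁ H₂ : Type*}
    (μ : Z × H₁ × H₂ → ℝ) (h0 : ∀ p, 0 ≤ μ p) (h1 : HasSum μ 1)
    (μZ : Z → ℝ) (hZ : ∀ z, μZ z = ∑' p : H₁ × H₂, μ (z, p))
    (μH₁ : H₁ → ℝ) (hH₁ : ∀ h₁, μH₁ h₁ = ∑' p : Z × H₂, μ (p.1, h₁, p.2))
    (μH₂ : H₂ → ℝ) (hH₂ : ∀ h₂, μH₂ h₂ = ∑' p : Z × H₁, μ (p.1, p.2, h₂))
    (μZH₁ : Z × H₁ → ℝ) (hZH₁ : ∀ z h₁, μZH₁ (z, h₁) = ∑' h₂, μ (z, h₁, h₂))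
    (μZH₂ : Z × H₂ → ℝ) (hZH₂ : ∀ z h₂, μZH₂ (z, h₂) = ∑' h₁, μ (z, h₁, h₂))
    (μH₁H₂ : H₁ × H₂ → ℝ) (hH₁H₂ : ∀ h₁ h₂, μH₁H₂ (h₁, h₂) = ∑' z, μ (z, h₁, h₂))
    (hMarkov : ∀ z h₁ h₂, μ (z, h₁, h₂) * μH₁ h₁ = μZH₁ (z, h₁) * μH₁H₂ (h₁, h₂)) :
    tv (fun p : Z × H₁ => μZ p.1 * μH₁ p.2) μZH₁ ≥
      tv (fun p : Z × H₂ => μZ p.1 * μH₂ p.2) μZH₂ := by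
  have hμ : Summable μ := h1.summable
  refine sub_le_sub_left (tsum_min_le_tsum_min_of_markov h0 hμ
    (fun z => hZ z ▸ tsum_nonneg fun _ => h0 _)
    (fun x => hH₁H₂ x.1 x.2 ▸ tsum_nonneg fun _ => h0 _) (fun z h₁ h₂ => ?_)
    (fun h₁ => ?_) (fun h₂ => ?_) (fun z h₁ => ?_) (fun z h₂ => ?_) hMarkov) 1
  · rw [hH₁H₂]
    exact (hμ.comp_injective (i := fun z => (z, h₁, h₂)) fun _ _ h => by
      simp_all [Prod.ext_iff]).le_tsum z fun _ _ => h0 _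
  · simp only [hH₁H₂, hH₁]
    exact (hμ.comp_injective fun _ _ h => by simp_all [Prod.ext_iff]).hasSum_tsum_fiber
      (Equiv.prodComm H₂ Z)
  · simp only [hH₁H₂, hH₂]
    exact (hμ.comp_injective fun _ _ h => by simp_all [Prod.ext_iff]).hasSum_tsum_fiber
      (Equiv.prodComm H₁ Z)
  · exact hZH₁ z h₁ ▸ (hμ.comp_injective fun _ _ h => by simp_all [Prod.ext_iff]).hasSum
  · exact hZH₂ z h₂ ▸ (hμ.comp_injective fun _ _ h => by simp_all [Prod.ext_iff]).hasSum

/-- Data processing inequality for mutual affinity: if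
`Z → H₁ → H₂` is a Markov chain, then `I(Z,H₁) ≥ I(Z,H₂)`. -/
theorem stmt7 {Z H₁ H₂ : Type*} [Countable Z] [Countable H₁] [Countable H₂]
    (μ : Z × H₁ × H₂ → ℝ) (h0 : ∀ p, 0 ≤ μ p) (h1 : HasSum μ 1)
    (μZ : Z → ℝ) (hZ : ∀ z, μZ z = ∑' p : H₁ × H₂, μ (z, p))
    (μH₁ : H₁ → ℝ) (hH₁ : ∀ h₁, μH₁ h₁ = ∑' p : Z × H₂, μ (p.1, h₁, p.2))
    (μH₂ : H₂ → ℝ) (hH₂ : ∀ h₂, μH₂ h₂ = ∑' p : Z × H₁, μ (p.1, p.2, h₂))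
    (μZH₁ : Z × H₁ → ℝ) (hZH₁ : ∀ z h₁, μZH₁ (z, h₁) = ∑' h₂, μ (z, h₁, h₂))
    (μZH₂ : Z × H₂ → ℝ) (hZH₂ : ∀ z h₂, μZH₂ (z, h₂) = ∑' h₁, μ (z, h₁, h₂))
    (μH₁H₂ : H₁ × H₂ → ℝ) (hH₁H₂ : ∀ h₁ h₂, μH₁H₂ (h₁, h₂) = ∑' z, μ (z, h₁, h₂))
    (hMarkov : ∀ z h₁ h₂, μ (z, h₁, h₂) * μH₁ h₁ = μZH₁ (z, h₁) * μH₁H₂ (h₁, h₂)) :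
    tv (fun p : Z × H₁ => μZ p.1 * μH₁ p.2) μZH₁ ≥
      tv (fun p : Z × H₂ => μZ p.1 * μH₂ p.2) μZH₂ :=
  stmt7_general μ h0 h1 μZ hZ μH₁ hH₁ μH₂ hH₂ μZH₁ hZH₁ μZH₂ hZH₂ μH₁H₂ hH₁H₂ hMarkov
end

section
/- (Theorem 1.) Let Z and H be countable alphabets, m ≥ 1, P a probability mass function on Z, and Q a learning kernel assigning to each S ∈ Z^m a pmf Q(·|S) on H. For every loss function L : H × Z → ℝ with 0 ≤ L(h,z) ≤ 1 for all h, z, the true risk R = ∑_{S} P^{⊗m}(S) ∑_{h} Q(h|S) ∑_{z} P(z)·L(h,z) and the empirical risk R_emp = ∑_{S} P^{⊗m}(S) ∑_{h} Q(h|S)·(1/m)∑_{i=1}^m L(h,S_i) satisfy |R − R_emp| ≤ I(Z_trn, H), the mutual affinity between a uniformly drawn training example and the inferred hypothesis. -/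
/-- `p` is a probability mass function: nonnegative and summing to `1`. -/
def IsPMF {A : Type*} (p : A → ℝ) : Prop := (∀ a, 0 ≤ p a) ∧ HasSum p 1

/-- Product pmf `P^{⊗m}` of `m` i.i.d. draws from `P`. -/
noncomputable def prodPMF {Z : Type*} (m : ℕ) (P : Z → ℝ) (S : Fin m → Z) : ℝ :=
  ∏ i, P (S i)

/-- Joint pmf of a uniformly drawn training example `Z_trn` and the inferred
hypothesis `H`: `μ(z,h) = ∑_S P^{⊗m}(S) · (1/m)∑_i 1{S_i = z} · Q(h|S)`. -/
noncomputable def jointZH {Z H : Type*} (m : ℕ) (P : Z → ℝ)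
    (Q : (Fin m → Z) → H → ℝ) (z : Z) (h : H) : ℝ :=
  haveI := Classical.decEq Z
  ∑' S : Fin m → Z,
    prodPMF m P S * ((1 / (m : ℝ)) * ∑ i, if S i = z then (1 : ℝ) else 0) * Q S h

/-- Marginal of `Z_trn` under the joint pmf `jointZH`. -/
noncomputable def margZ {Z H : Type*} (m : ℕ) (P : Z → ℝ)
    (Q : (Fin m → Z) → H → ℝ) (z : Z) : ℝ :=
  ∑' h : H, jointZH m P Q z h

/-- Marginal of the hypothesis `H` under the joint pmf `jointZH`. -/
noncomputable def margH {Z H : Type*} (m : ℕ) (P : Z → ℝ)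
    (Q : (Fin m → Z) → H → ℝ) (h : H) : ℝ :=
  ∑' z : Z, jointZH m P Q z h

/-- Mutual affinity `I(Z_trn, H) = ‖μ_Z ⊗ μ_H, μ‖`. -/
noncomputable def affinity {Z H : Type*} (m : ℕ) (P : Z → ℝ)
    (Q : (Fin m → Z) → H → ℝ) : ℝ :=
  tv (fun p : Z × H => margZ m P Q p.1 * margH m P Q p.2)
    (fun p : Z × H => jointZH m P Q p.1 p.2)

/-- True risk `R(𝓛) = ∑_S P^{⊗m}(S) ∑_h Q(h|S) ∑_z P(z)·L(h,z)`. -/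
noncomputable def trueRisk {Z H : Type*} (m : ℕ) (P : Z → ℝ)
    (Q : (Fin m → Z) → H → ℝ) (L : H → Z → ℝ) : ℝ :=
  ∑' S : Fin m → Z, prodPMF m P S * ∑' h : H, Q S h * ∑' z : Z, P z * L h z

/-- Empirical risk `R_emp(𝓛) = ∑_S P^{⊗m}(S) ∑_h Q(h|S)·(1/m)∑_i L(h,S_i)`. -/
noncomputable def empRisk {Z H : Type*} (m : ℕ) (P : Z → ℝ)
    (Q : (Fin m → Z) → H → ℝ) (L : H → Z → ℝ) : ℝ :=
  ∑' S : Fin m → Z, prodPMF m P S * ∑' h : H, Q S h * ((1 / (m : ℝ)) * ∑ i, L h (S i))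

/-- Learning capacity `C^(m)(𝓛) = sup_P I(Z_trn, H)`. -/
noncomputable def capacity {Z H : Type*} (m : ℕ)
    (Q : (Fin m → Z) → H → ℝ) : ℝ :=
  sSup {c : ℝ | ∃ P : Z → ℝ, IsPMF P ∧ c = affinity m P Q}


open ENNReal

lemma toReal_tsum_ofReal {A : Type*} (f : A → ℝ) (hf : ∀ a, 0 ≤ f a) :
    (∑' a, ENNReal.ofReal (f a)).toReal = ∑' a, f a := by
  by_cases hs : Summable f
  · rw [← ENNReal.ofReal_tsum_of_nonneg hf hs, ENNReal.toReal_ofReal (tsum_nonneg hf)]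
  · have hinf : ∑' a, ENNReal.ofReal (f a) = ∞ := by
      by_contra h
      exact hs ((ENNReal.summable_toReal h).congr fun a => ENNReal.toReal_ofReal (hf a))
    simp [hinf, tsum_eq_zero_of_not_summable hs]

lemma hasSum_one_of_ofReal {A : Type*} (f : A → ℝ) (hf : ∀ a, 0 ≤ f a)
    (h : ∑' a, ENNReal.ofReal (f a) = 1) : HasSum f 1 := by
  have hne : (∑' a, ENNReal.ofReal (f a)) ≠ ∞ := by simp [h]
  have hsum : Summable f :=
    (ENNReal.summable_toReal hne).congr fun a => ENNReal.toReal_ofReal (hf a)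
  have ht : ∑' a, f a = 1 := by
    rw [← toReal_tsum_ofReal f hf, h, ENNReal.toReal_one]
  exact ht ▸ hsum.hasSum

lemma tsum_pi_prod {Z : Type*} : ∀ (m : ℕ) (g : Fin m → Z → ℝ≥0∞),
    ∑' S : Fin m → Z, ∏ j, g j (S j) = ∏ j, ∑' z, g j z := by
  intro m
  induction m with
  | zero =>
      intro g
      rw [tsum_eq_single (fun i => i.elim0) (fun b hb => absurd (Subsingleton.elim b _) hb)]
      simp
  | succ n ih =>
      intro g
      rw [← (Fin.consEquiv (fun _ : Fin (n+1) => Z)).tsum_eq, ENNReal.tsum_prod']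
      simp only [Fin.consEquiv_apply, Fin.prod_univ_succ, Fin.cons_zero, Fin.cons_succ]
      calc ∑' (z : Z) (S : Fin n → Z), g 0 z * ∏ j, g j.succ (S j)
          = ∑' (z : Z), g 0 z * ∑' S : Fin n → Z, ∏ j, g j.succ (S j) := by
            exact tsum_congr fun z => ENNReal.tsum_mul_left
        _ = (∑' z, g 0 z) * ∏ j : Fin n, ∑' z, g j.succ z := by
            rw [ih]; exact ENNReal.tsum_mul_right

lemma tsum_pi_marg {Z : Type*} (m : ℕ) (Pe : Z → ℝ≥0∞) (hPe : ∑' z, Pe z = 1)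
    (i : Fin m) (φ : Z → ℝ≥0∞) :
    ∑' S : Fin m → Z, (∏ j, Pe (S j)) * φ (S i) = ∑' z, Pe z * φ z := by
  classical
  set g : Fin m → Z → ℝ≥0∞ := fun j z => if j = i then Pe z * φ z else Pe z with hg
  have hprod : ∀ S : Fin m → Z, ∏ j, g j (S j) = (∏ j, Pe (S j)) * φ (S i) := by
    intro S
    rw [← Finset.mul_prod_erase Finset.univ (fun j => g j (S j)) (Finset.mem_univ i),
        ← Finset.mul_prod_erase Finset.univ (fun j => Pe (S j)) (Finset.mem_univ i)]
    rw [Finset.prod_congr rfl (fun j hj => by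
      simp [hg, Finset.ne_of_mem_erase hj] : ∀ j ∈ Finset.univ.erase i,
        g j (S j) = Pe (S j))]
    simp only [hg, if_pos rfl]
    ring
  calc ∑' S : Fin m → Z, (∏ j, Pe (S j)) * φ (S i)
      = ∑' S : Fin m → Z, ∏ j, g j (S j) := tsum_congr fun S => (hprod S).symm
    _ = ∏ j, ∑' z, g j z := tsum_pi_prod m g
    _ = ∑' z, Pe z * φ z := by
        rw [← Finset.mul_prod_erase Finset.univ (fun j => ∑' z, g j z) (Finset.mem_univ i),
          Finset.prod_congr rfl (fun j hj => by
            simp only [hg, if_neg (Finset.ne_of_mem_erase hj)]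
            exact hPe : ∀ j ∈ Finset.univ.erase i, (∑' z, g j z) = 1)]
        simp [hg]

section Ecore
variable {Z H : Type*} [DecidableEq Z] {m : ℕ} (Pe : Z → ℝ≥0∞)
  (Qe : (Fin m → Z) → H → ℝ≥0∞) {me : ℝ≥0∞}

lemma tsum_ind (S : Fin m → Z) :
    ∑' z : Z, (∑ i, if S i = z then (1 : ℝ≥0∞) else 0) = (m : ℝ≥0∞) := by
  rw [Summable.tsum_finsetSum (fun i _ => ENNReal.summable)]
  have : ∀ i : Fin m, (∑' z : Z, if S i = z then (1 : ℝ≥0∞) else 0) = 1 := fun i =>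
    (tsum_eq_single (S i) (fun z hz => if_neg fun hc => hz hc.symm)).trans (if_pos rfl)
  simp [this]

lemma E_margH (hme : me * (m : ℝ≥0∞) = 1) (h : H) :
    ∑' (z : Z) (S : Fin m → Z),
        (∏ j, Pe (S j)) * (me * ∑ i, if S i = z then (1:ℝ≥0∞) else 0) * Qe S h
      = ∑' S : Fin m → Z, (∏ j, Pe (S j)) * Qe S h := by
  rw [ENNReal.tsum_comm]
  refine tsum_congr fun S => ?_
  calc ∑' z, (∏ j, Pe (S j)) * (me * ∑ i, if S i = z then (1:ℝ≥0∞) else 0) * Qe S h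
      = ((∏ j, Pe (S j)) * me * Qe S h)
          * ∑' z, ∑ i, if S i = z then (1:ℝ≥0∞) else 0 := by
        rw [← ENNReal.tsum_mul_left]; exact tsum_congr fun z => by ring
    _ = (∏ j, Pe (S j)) * Qe S h * (me * (m : ℝ≥0∞)) := by
        rw [tsum_ind]; ring
    _ = (∏ j, Pe (S j)) * Qe S h := by rw [hme, mul_one]

lemma E_margZ (hPe1 : ∑' z, Pe z = 1) (hQe1 : ∀ S, ∑' h, Qe S h = 1)
    (hme : me * (m : ℝ≥0∞) = 1) (z : Z) :
    ∑' (h : H) (S : Fin m → Z),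
        (∏ j, Pe (S j)) * (me * ∑ i, if S i = z then (1:ℝ≥0∞) else 0) * Qe S h
      = Pe z := by
  rw [ENNReal.tsum_comm]
  calc ∑' (S : Fin m → Z) (h : H),
        (∏ j, Pe (S j)) * (me * ∑ i, if S i = z then (1:ℝ≥0∞) else 0) * Qe S h
      = ∑' S : Fin m → Z,
          (∏ j, Pe (S j)) * (me * ∑ i, if S i = z then (1:ℝ≥0∞) else 0) := by
        refine tsum_congr fun S => ?_
        rw [ENNReal.tsum_mul_left, hQe1 S, mul_one]
    _ = me * ∑' S : Fin m → Z,
          ∑ i, (∏ j, Pe (S j)) * (if S i = z then (1:ℝ≥0∞) else 0) := by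
        rw [← ENNReal.tsum_mul_left]
        refine tsum_congr fun S => ?_
        simp only [Finset.mul_sum]
        exact Finset.sum_congr rfl fun i _ => by ring
    _ = me * ∑ i : Fin m, ∑' S : Fin m → Z,
          (∏ j, Pe (S j)) * (if S i = z then (1:ℝ≥0∞) else 0) := by
        rw [Summable.tsum_finsetSum (fun i _ => ENNReal.summable)]
    _ = me * ∑ i : Fin m, ∑' x : Z, Pe x * (if x = z then (1:ℝ≥0∞) else 0) := by
        congr 1
        exact Finset.sum_congr rfl fun i _ =>
          tsum_pi_marg m Pe hPe1 i (fun x => if x = z then (1:ℝ≥0∞) else 0)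
    _ = me * ∑ i : Fin m, Pe z := by
        congr 1
        refine Finset.sum_congr rfl fun i _ => ?_
        rw [tsum_eq_single z (fun x hx => by simp [hx]), if_pos rfl, mul_one]
    _ = Pe z := by
        rw [Finset.sum_const, Finset.card_univ, Fintype.card_fin, nsmul_eq_mul,
          ← mul_assoc, hme, one_mul]

end Ecore

section Ecore2
variable {Z H : Type*} [DecidableEq Z] {m : ℕ} (Pe : Z → ℝ≥0∞)
  (Qe : (Fin m → Z) → H → ℝ≥0∞) {me : ℝ≥0∞}

lemma E_emp (Le : H → Z → ℝ≥0∞) :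
    ∑' (p : Z × H),
        (∑' S : Fin m → Z, (∏ j, Pe (S j))
          * (me * ∑ i, if S i = p.1 then (1:ℝ≥0∞) else 0) * Qe S p.2) * Le p.2 p.1
      = ∑' S : Fin m → Z,
          (∏ j, Pe (S j)) * ∑' h : H, Qe S h * (me * ∑ i, Le h (S i)) := by
  rw [ENNReal.tsum_prod']
  calc ∑' (z : Z) (h : H), (∑' S : Fin m → Z, (∏ j, Pe (S j))
          * (me * ∑ i, if S i = z then (1:ℝ≥0∞) else 0) * Qe S h) * Le h z
      = ∑' (z : Z) (h : H) (S : Fin m → Z), (∏ j, Pe (S j))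
          * (me * ∑ i, if S i = z then (1:ℝ≥0∞) else 0) * Qe S h * Le h z :=
        tsum_congr fun z => tsum_congr fun h => ENNReal.tsum_mul_right.symm
    _ = ∑' (z : Z) (S : Fin m → Z) (h : H), (∏ j, Pe (S j))
          * (me * ∑ i, if S i = z then (1:ℝ≥0∞) else 0) * Qe S h * Le h z :=
        tsum_congr fun z => ENNReal.tsum_comm
    _ = ∑' (S : Fin m → Z) (z : Z) (h : H), (∏ j, Pe (S j))
          * (me * ∑ i, if S i = z then (1:ℝ≥0∞) else 0) * Qe S h * Le h z :=
        ENNReal.tsum_comm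
    _ = ∑' (S : Fin m → Z) (h : H) (z : Z), (∏ j, Pe (S j))
          * (me * ∑ i, if S i = z then (1:ℝ≥0∞) else 0) * Qe S h * Le h z :=
        tsum_congr fun S => ENNReal.tsum_comm
    _ = ∑' S : Fin m → Z,
          (∏ j, Pe (S j)) * ∑' h : H, Qe S h * (me * ∑ i, Le h (S i)) := by
        refine tsum_congr fun S => ?_
        rw [← ENNReal.tsum_mul_left]
        refine tsum_congr fun h => ?_
        calc ∑' z : Z, (∏ j, Pe (S j))
                * (me * ∑ i, if S i = z then (1:ℝ≥0∞) else 0) * Qe S h * Le h z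
            = ((∏ j, Pe (S j)) * Qe S h * me)
                * ∑' z : Z, (∑ i, if S i = z then (1:ℝ≥0∞) else 0) * Le h z := by
              rw [← ENNReal.tsum_mul_left]
              exact tsum_congr fun z => by ring
          _ = ((∏ j, Pe (S j)) * Qe S h * me) * ∑ i, Le h (S i) := by
              congr 1
              calc ∑' z : Z, (∑ i, if S i = z then (1:ℝ≥0∞) else 0) * Le h z
                  = ∑' z : Z, ∑ i, (if S i = z then Le h z else 0) := by
                    refine tsum_congr fun z => ?_
                    rw [Finset.sum_mul]
                    exact Finset.sum_congr rfl fun i _ => by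
                      rw [ite_mul, one_mul, zero_mul]
                _ = ∑ i, ∑' z : Z, (if S i = z then Le h z else 0) :=
                    Summable.tsum_finsetSum (fun i _ => ENNReal.summable)
                _ = ∑ i, Le h (S i) := Finset.sum_congr rfl fun i _ => by
                    rw [tsum_eq_single (S i) (fun z hz => if_neg fun hc => hz hc.symm),
                      if_pos rfl]
          _ = (∏ j, Pe (S j)) * (Qe S h * (me * ∑ i, Le h (S i))) := by ring

lemma E_true (Le : H → Z → ℝ≥0∞) :
    ∑' (p : Z × H),
        Pe p.1 * (∑' S : Fin m → Z, (∏ j, Pe (S j)) * Qe S p.2) * Le p.2 p.1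
      = ∑' S : Fin m → Z,
          (∏ j, Pe (S j)) * ∑' h : H, Qe S h * ∑' z : Z, Pe z * Le h z := by
  rw [ENNReal.tsum_prod', ENNReal.tsum_comm]
  calc ∑' (h : H) (z : Z),
          Pe z * (∑' S : Fin m → Z, (∏ j, Pe (S j)) * Qe S h) * Le h z
      = ∑' h : H, (∑' S : Fin m → Z, (∏ j, Pe (S j)) * Qe S h)
          * ∑' z : Z, Pe z * Le h z := by
        refine tsum_congr fun h => ?_
        rw [← ENNReal.tsum_mul_left]
        exact tsum_congr fun z => by ring
    _ = ∑' (h : H) (S : Fin m → Z),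
          (∏ j, Pe (S j)) * Qe S h * ∑' z : Z, Pe z * Le h z :=
        tsum_congr fun h => ENNReal.tsum_mul_right.symm
    _ = ∑' (S : Fin m → Z) (h : H),
          (∏ j, Pe (S j)) * Qe S h * ∑' z : Z, Pe z * Le h z :=
        ENNReal.tsum_comm
    _ = ∑' S : Fin m → Z,
          (∏ j, Pe (S j)) * ∑' h : H, Qe S h * ∑' z : Z, Pe z * Le h z := by
        refine tsum_congr fun S => ?_
        rw [← ENNReal.tsum_mul_left]
        exact tsum_congr fun h => by rw [mul_assoc]

end Ecore2


lemma key_one_sided {A : Type*} {p q f : A → ℝ} (hp : IsPMF p) (hq : IsPMF q)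
    (hf0 : ∀ a, 0 ≤ f a) (hf1 : ∀ a, f a ≤ 1) :
    (∑' a, p a * f a) - (∑' a, q a * f a) ≤ 1 - ∑' a, min (p a) (q a) := by
  have hps : Summable p := hp.2.summable
  have hqs : Summable q := hq.2.summable
  have smn : Summable (fun a => min (p a) (q a)) :=
    Summable.of_nonneg_of_le (fun a => le_min (hp.1 a) (hq.1 a))
      (fun a => min_le_left _ _) hps
  have spf : Summable (fun a => p a * f a) :=
    Summable.of_nonneg_of_le (fun a => mul_nonneg (hp.1 a) (hf0 a))
      (fun a => mul_le_of_le_one_right (hp.1 a) (hf1 a)) hps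
  have sqf : Summable (fun a => q a * f a) :=
    Summable.of_nonneg_of_le (fun a => mul_nonneg (hq.1 a) (hf0 a))
      (fun a => mul_le_of_le_one_right (hq.1 a) (hf1 a)) hqs
  have smnf : Summable (fun a => min (p a) (q a) * f a) :=
    Summable.of_nonneg_of_le
      (fun a => mul_nonneg (le_min (hp.1 a) (hq.1 a)) (hf0 a))
      (fun a => mul_le_of_le_one_right (le_min (hp.1 a) (hq.1 a)) (hf1 a)) smn
  have h1 : (∑' a, p a * f a) - (∑' a, min (p a) (q a) * f a)
      ≤ 1 - ∑' a, min (p a) (q a) := by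
    rw [← Summable.tsum_sub spf smnf, ← hp.2.tsum_eq, ← Summable.tsum_sub hps smn]
    refine Summable.tsum_le_tsum (fun a => ?_) (spf.sub smnf) (hps.sub smn)
    nlinarith [mul_nonneg (sub_nonneg.2 (min_le_left (p a) (q a)))
      (sub_nonneg.2 (hf1 a))]
  have h2 : (∑' a, min (p a) (q a) * f a) ≤ ∑' a, q a * f a :=
    Summable.tsum_le_tsum (fun a => mul_le_mul_of_nonneg_right (min_le_right _ _) (hf0 a)) smnf sqf
  linarith

lemma tv_bound {A : Type*} {p q f : A → ℝ} (hp : IsPMF p) (hq : IsPMF q)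
    (hf0 : ∀ a, 0 ≤ f a) (hf1 : ∀ a, f a ≤ 1) :
    |(∑' a, p a * f a) - ∑' a, q a * f a| ≤ tv p q := by
  rw [abs_sub_le_iff]
  constructor
  · exact key_one_sided hp hq hf0 hf1
  · have := key_one_sided hq hp hf0 hf1
    simpa [tv, min_comm] using this

/-- Theorem 1: for every loss `L : H × Z → [0,1]`, the difference
between true and empirical risks is at most the mutual affinity `I(Z_trn, H)`. -/
theorem stmt8 {Z H : Type*} [Countable Z] [Countable H] (m : ℕ) (hm : 1 ≤ m)
    (P : Z → ℝ) (hP : IsPMF P)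
    (Q : (Fin m → Z) → H → ℝ) (hQ : ∀ S, IsPMF (Q S))
    (L : H → Z → ℝ) (hL : ∀ h z, 0 ≤ L h z ∧ L h z ≤ 1) :
    |trueRisk m P Q L - empRisk m P Q L| ≤ affinity m P Q := by
  letI : DecidableEq Z := Classical.decEq Z
  set Pe : Z → ℝ≥0∞ := fun z => ENNReal.ofReal (P z) with hPedef
  set Qe : (Fin m → Z) → H → ℝ≥0∞ := fun S h => ENNReal.ofReal (Q S h) with hQedef
  set Le : H → Z → ℝ≥0∞ := fun h z => ENNReal.ofReal (L h z) with hLedef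
  set me : ℝ≥0∞ := ENNReal.ofReal (1 / (m : ℝ)) with hmedef
  have hL0 : ∀ h z, 0 ≤ L h z := fun h z => (hL h z).1
  have hL1 : ∀ h z, L h z ≤ 1 := fun h z => (hL h z).2
  have hm0 : (m : ℝ) ≠ 0 := Nat.cast_ne_zero.2 (by omega)
  have hmpos : (0 : ℝ) ≤ 1 / (m : ℝ) := by positivity
  have hPe1 : ∑' z, Pe z = 1 := by
    simp only [hPedef]
    rw [← ENNReal.ofReal_tsum_of_nonneg hP.1 hP.2.summable, hP.2.tsum_eq,
      ENNReal.ofReal_one]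
  have hQe1 : ∀ S, ∑' h, Qe S h = 1 := fun S => by
    simp only [hQedef]
    rw [← ENNReal.ofReal_tsum_of_nonneg (hQ S).1 (hQ S).2.summable, (hQ S).2.tsum_eq,
      ENNReal.ofReal_one]
  have hme : me * (m : ℝ≥0∞) = 1 := by
    simp only [hmedef]
    rw [← ENNReal.ofReal_natCast m, ← ENNReal.ofReal_mul hmpos, one_div,
      inv_mul_cancel₀ hm0, ENNReal.ofReal_one]
  have hprod0 : ∀ S : Fin m → Z, 0 ≤ prodPMF m P S := fun S =>
    Finset.prod_nonneg fun j _ => hP.1 _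
  have hpeS : ∀ S : Fin m → Z, ENNReal.ofReal (prodPMF m P S) = ∏ j, Pe (S j) :=
    fun S => ENNReal.ofReal_prod_of_nonneg (fun j _ => hP.1 _)
  have hind : ∀ (S : Fin m → Z) (z : Z),
      (0:ℝ) ≤ (1/(m:ℝ)) * ∑ i, (if S i = z then (1:ℝ) else 0) := fun S z => by
    have : (0:ℝ) ≤ ∑ i : Fin m, (if S i = z then (1:ℝ) else 0) :=
      Finset.sum_nonneg fun i _ => by split <;> norm_num
    positivity
  have ht0 : ∀ (z : Z) (h : H) (S : Fin m → Z),
      0 ≤ prodPMF m P S * ((1/(m:ℝ)) * ∑ i, if S i = z then (1:ℝ) else 0) * Q S h :=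
    fun z h S => mul_nonneg (mul_nonneg (hprod0 S) (hind S z)) ((hQ S).1 h)
  have htE : ∀ (z : Z) (h : H) (S : Fin m → Z),
      ENNReal.ofReal (prodPMF m P S * ((1/(m:ℝ)) * ∑ i, if S i = z then (1:ℝ) else 0)
          * Q S h)
        = (∏ j, Pe (S j)) * (me * ∑ i, if S i = z then (1:ℝ≥0∞) else 0) * Qe S h := by
    intro z h S
    rw [ENNReal.ofReal_mul (mul_nonneg (hprod0 S) (hind S z)),
      ENNReal.ofReal_mul (hprod0 S), ENNReal.ofReal_mul hmpos,
      ENNReal.ofReal_sum_of_nonneg (fun i _ => by split <;> norm_num), hpeS S]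
    simp [apply_ite ENNReal.ofReal, hmedef, hQedef]
  set Je : Z → H → ℝ≥0∞ := fun z h => ∑' S : Fin m → Z,
      (∏ j, Pe (S j)) * (me * ∑ i, if S i = z then (1:ℝ≥0∞) else 0) * Qe S h with hJedef
  have hjoint : ∀ z h, jointZH m P Q z h = (Je z h).toReal := by
    intro z h
    simp only [jointZH, hJedef]
    rw [← toReal_tsum_ofReal _ (ht0 z h)]
    exact congrArg ENNReal.toReal (tsum_congr fun S => htE z h S)
  have hJmargZ : ∀ z, ∑' h : H, Je z h = Pe z := fun z =>
    E_margZ Pe Qe hPe1 hQe1 hme z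
  have hJfin : ∀ z h, Je z h ≠ ⊤ := fun z h =>
    ne_top_of_le_ne_top ENNReal.ofReal_ne_top
      (le_trans (ENNReal.le_tsum h) (hJmargZ z).le)
  have hmargZ : ∀ z, margZ m P Q z = P z := fun z => by
    simp only [margZ]
    calc ∑' h, jointZH m P Q z h = ∑' h, (Je z h).toReal :=
          tsum_congr fun h => hjoint z h
      _ = (∑' h, Je z h).toReal := (ENNReal.tsum_toReal_eq (fun h => hJfin z h)).symm
      _ = (Pe z).toReal := by rw [hJmargZ]
      _ = P z := ENNReal.toReal_ofReal (hP.1 z)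
  set Me : H → ℝ≥0∞ := fun h => ∑' S : Fin m → Z, (∏ j, Pe (S j)) * Qe S h with hMedef
  have hJmargH : ∀ h, ∑' z : Z, Je z h = Me h := fun h => E_margH Pe Qe hme h
  have hpe1 : ∑' S : Fin m → Z, ∏ j, Pe (S j) = 1 := by
    rw [tsum_pi_prod m (fun _ => Pe)]; simp [hPe1]
  have hMe1 : ∑' h, Me h = 1 := by
    simp only [hMedef]
    rw [ENNReal.tsum_comm]
    calc ∑' (S : Fin m → Z) (h : H), (∏ j, Pe (S j)) * Qe S h
        = ∑' S : Fin m → Z, ∏ j, Pe (S j) := tsum_congr fun S => by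
          rw [ENNReal.tsum_mul_left, hQe1 S, mul_one]
      _ = 1 := hpe1
  have hMefin : ∀ h, Me h ≠ ⊤ := fun h => by
    have hle := ENNReal.le_tsum (f := Me) h
    rw [hMe1] at hle
    exact ne_top_of_le_ne_top ENNReal.one_ne_top hle
  have hmargH : ∀ h, margH m P Q h = (Me h).toReal := fun h => by
    simp only [margH]
    calc ∑' z, jointZH m P Q z h = ∑' z, (Je z h).toReal :=
          tsum_congr fun z => hjoint z h
      _ = (∑' z, Je z h).toReal := (ENNReal.tsum_toReal_eq (fun z => hJfin z h)).symm
      _ = (Me h).toReal := by rw [hJmargH]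
  -- the joint distribution is a pmf
  have hμ0 : ∀ p : Z × H, 0 ≤ jointZH m P Q p.1 p.2 := fun p => by
    rw [hjoint]; exact ENNReal.toReal_nonneg
  have hμofReal : ∀ p : Z × H, ENNReal.ofReal (jointZH m P Q p.1 p.2) = Je p.1 p.2 :=
    fun p => by rw [hjoint, ENNReal.ofReal_toReal (hJfin _ _)]
  have hμsum : ∑' p : Z × H, ENNReal.ofReal (jointZH m P Q p.1 p.2) = 1 := by
    rw [tsum_congr hμofReal, ENNReal.tsum_prod']
    calc ∑' (z : Z) (h : H), Je z h = ∑' z, Pe z := tsum_congr fun z => hJmargZ z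
      _ = 1 := hPe1
  have hμpmf : IsPMF (fun p : Z × H => jointZH m P Q p.1 p.2) :=
    ⟨hμ0, hasSum_one_of_ofReal _ hμ0 hμsum⟩
  -- the product of the marginals is a pmf
  have hν0 : ∀ p : Z × H, 0 ≤ margZ m P Q p.1 * margH m P Q p.2 := fun p =>
    mul_nonneg (by rw [hmargZ]; exact hP.1 _)
      (by rw [hmargH]; exact ENNReal.toReal_nonneg)
  have hνofReal : ∀ p : Z × H,
      ENNReal.ofReal (margZ m P Q p.1 * margH m P Q p.2) = Pe p.1 * Me p.2 := fun p => by
    rw [hmargZ, hmargH, ENNReal.ofReal_mul (hP.1 _),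
      ENNReal.ofReal_toReal (hMefin _)]
  have hνsum : ∑' p : Z × H, ENNReal.ofReal (margZ m P Q p.1 * margH m P Q p.2) = 1 := by
    rw [tsum_congr hνofReal, ENNReal.tsum_prod']
    calc ∑' (z : Z) (h : H), Pe z * Me h = ∑' z : Z, Pe z * ∑' h, Me h :=
          tsum_congr fun z => ENNReal.tsum_mul_left
      _ = 1 := by rw [hMe1]; simp only [mul_one]; exact hPe1
  have hνpmf : IsPMF (fun p : Z × H => margZ m P Q p.1 * margH m P Q p.2) :=
    ⟨hν0, hasSum_one_of_ofReal _ hν0 hνsum⟩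
  -- empirical risk identity
  have hbound : ∀ (hh : H) (S : Fin m → Z), (1/(m:ℝ)) * ∑ i, L hh (S i) ≤ 1 := by
    intro hh S
    have h1 : ∑ i, L hh (S i) ≤ (m:ℝ) := by
      calc ∑ i, L hh (S i) ≤ ∑ _i : Fin m, (1:ℝ) := Finset.sum_le_sum fun i _ => hL1 _ _
        _ = m := by simp
    calc (1/(m:ℝ)) * ∑ i, L hh (S i) ≤ (1/(m:ℝ)) * m :=
          mul_le_mul_of_nonneg_left h1 hmpos
      _ = 1 := by field_simp
  have hempt0 : ∀ (S : Fin m → Z) (h : H),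
      0 ≤ Q S h * ((1/(m:ℝ)) * ∑ i, L h (S i)) := fun S h =>
    mul_nonneg ((hQ S).1 h) (mul_nonneg hmpos (Finset.sum_nonneg fun i _ => hL0 _ _))
  have hLsum_emp : ∀ S, Summable (fun h => Q S h * ((1/(m:ℝ)) * ∑ i, L h (S i))) :=
    fun S => Summable.of_nonneg_of_le (hempt0 S)
      (fun h => mul_le_of_le_one_right ((hQ S).1 h) (hbound h S)) ((hQ S).2.summable)
  have hw0emp : ∀ S, 0 ≤ ∑' h, Q S h * ((1/(m:ℝ)) * ∑ i, L h (S i)) := fun S =>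
    tsum_nonneg (hempt0 S)
  have hwEemp : ∀ S, ENNReal.ofReal (∑' h, Q S h * ((1/(m:ℝ)) * ∑ i, L h (S i)))
      = ∑' h, Qe S h * (me * ∑ i, Le h (S i)) := fun S => by
    rw [ENNReal.ofReal_tsum_of_nonneg (hempt0 S) (hLsum_emp S)]
    exact tsum_congr fun h => by
      rw [ENNReal.ofReal_mul ((hQ S).1 h), ENNReal.ofReal_mul hmpos,
        ENNReal.ofReal_sum_of_nonneg (fun i _ => hL0 _ _)]
  have hemp : empRisk m P Q L = (∑' S : Fin m → Z,
      (∏ j, Pe (S j)) * ∑' h, Qe S h * (me * ∑ i, Le h (S i))).toReal := by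
    simp only [empRisk]
    rw [← toReal_tsum_ofReal _ (fun S => mul_nonneg (hprod0 S) (hw0emp S))]
    exact congrArg ENNReal.toReal (tsum_congr fun S => by
      rw [ENNReal.ofReal_mul (hprod0 S), hpeS S, hwEemp S])
  have hempId : empRisk m P Q L = ∑' p : Z × H, jointZH m P Q p.1 p.2 * L p.2 p.1 := by
    rw [hemp, ← E_emp Pe Qe Le (me := me)]
    rw [← toReal_tsum_ofReal (fun p : Z × H => jointZH m P Q p.1 p.2 * L p.2 p.1)
      (fun p => mul_nonneg (hμ0 p) (hL0 _ _))]
    exact congrArg ENNReal.toReal (tsum_congr fun p => by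
      rw [ENNReal.ofReal_mul (hμ0 p), hμofReal p, hJedef]).symm
  -- true risk identity
  have hvt0 : ∀ (hh : H) (z : Z), 0 ≤ P z * L hh z := fun hh z =>
    mul_nonneg (hP.1 z) (hL0 _ _)
  have hvsum : ∀ hh : H, Summable (fun z => P z * L hh z) := fun hh =>
    Summable.of_nonneg_of_le (hvt0 hh)
      (fun z => mul_le_of_le_one_right (hP.1 z) (hL1 _ _)) hP.2.summable
  have hv0 : ∀ hh : H, 0 ≤ ∑' z, P z * L hh z := fun hh => tsum_nonneg (hvt0 hh)
  have hv1 : ∀ hh : H, ∑' z, P z * L hh z ≤ 1 := fun hh => by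
    calc ∑' z, P z * L hh z ≤ ∑' z, P z :=
          Summable.tsum_le_tsum (fun z => mul_le_of_le_one_right (hP.1 z) (hL1 _ _))
            (hvsum hh) hP.2.summable
      _ = 1 := hP.2.tsum_eq
  have hvE : ∀ hh : H, ENNReal.ofReal (∑' z, P z * L hh z)
      = ∑' z, Pe z * Le hh z := fun hh => by
    rw [ENNReal.ofReal_tsum_of_nonneg (hvt0 hh) (hvsum hh)]
    exact tsum_congr fun z => by rw [ENNReal.ofReal_mul (hP.1 z)]
  have htruet0 : ∀ (S : Fin m → Z) (h : H),
      0 ≤ Q S h * ∑' z, P z * L h z := fun S h =>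
    mul_nonneg ((hQ S).1 h) (hv0 h)
  have hwsum_true : ∀ S, Summable (fun h => Q S h * ∑' z, P z * L h z) := fun S =>
    Summable.of_nonneg_of_le (htruet0 S)
      (fun h => mul_le_of_le_one_right ((hQ S).1 h) (hv1 h)) ((hQ S).2.summable)
  have hw0true : ∀ S, 0 ≤ ∑' h, Q S h * ∑' z, P z * L h z := fun S =>
    tsum_nonneg (htruet0 S)
  have hwEtrue : ∀ S, ENNReal.ofReal (∑' h, Q S h * ∑' z, P z * L h z)
      = ∑' h, Qe S h * ∑' z, Pe z * Le h z := fun S => by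
    rw [ENNReal.ofReal_tsum_of_nonneg (htruet0 S) (hwsum_true S)]
    exact tsum_congr fun h => by
      rw [ENNReal.ofReal_mul ((hQ S).1 h), hvE h]
  have htrue : trueRisk m P Q L = (∑' S : Fin m → Z,
      (∏ j, Pe (S j)) * ∑' h, Qe S h * ∑' z, Pe z * Le h z).toReal := by
    simp only [trueRisk]
    rw [← toReal_tsum_ofReal _ (fun S => mul_nonneg (hprod0 S) (hw0true S))]
    exact congrArg ENNReal.toReal (tsum_congr fun S => by
      rw [ENNReal.ofReal_mul (hprod0 S), hpeS S, hwEtrue S])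
  have htrueId : trueRisk m P Q L
      = ∑' p : Z × H, margZ m P Q p.1 * margH m P Q p.2 * L p.2 p.1 := by
    rw [htrue, ← E_true Pe Qe Le]
    rw [← toReal_tsum_ofReal
      (fun p : Z × H => margZ m P Q p.1 * margH m P Q p.2 * L p.2 p.1)
      (fun p => mul_nonneg (hν0 p) (hL0 _ _))]
    exact congrArg ENNReal.toReal (tsum_congr fun p => by
      rw [ENNReal.ofReal_mul (hν0 p), hνofReal p, hMedef]).symm
  rw [htrueId, hempId]
  exact tv_bound hνpmf hμpmf (fun p => hL0 p.2 p.1) (fun p => hL1 p.2 p.1)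
end

section
/- (Theorem 1, tightness.) Let Z and H be countable alphabets, m ≥ 1, P a probability mass function on Z, and Q a learning kernel assigning to each S ∈ Z^m a pmf Q(·|S) on H. Let μ be the joint pmf of (Z_trn, H) with marginals μ_Z (= P) and μ_H. Define the loss function L⋆(h,z) = 1 if μ_Z(z)·μ_H(h) ≥ μ(z,h) and L⋆(h,z) = 0 otherwise. Then L⋆ takes values in [0,1] and the corresponding true and empirical risks satisfy R − R_emp = I(Z_trn, H); hence the bound |R − R_emp| ≤ I(Z_trn, H) is achieved. -/
/-!
Averaging over the training set, `R` is the expectation of `L` under `P ⊗ μ_H` and `R_emp` its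
expectation under `μ`: the empirical mean over `S` is the expectation under the empirical
frequency of `S`, and `μ_Z = P` because every coordinate of `S` has law `P`. For the indicator
`L⋆` of `{μ ≤ μ_Z ⊗ μ_H}`, `(μ_Z ⊗ μ_H - μ) · L⋆ = μ_Z ⊗ μ_H - min (μ_Z ⊗ μ_H) μ`, whose total
mass is `1 - ∑ min = I(Z_trn, H)`. All sums are of nonnegative summable families against bounded
weights, so they can be rearranged freely.
-/

section Summation

variable {α β : Type*}

theorem Summable.mul_of_norm_le {f g : α → ℝ} {C : ℝ} (hf : Summable f) (hg : ∀ a, ‖g a‖ ≤ C) :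
    Summable fun a => f a * g a :=
  Summable.of_norm_bounded (hf.abs.mul_right C) fun a => by
    rw [norm_mul, Real.norm_eq_abs]
    exact mul_le_mul_of_nonneg_left (hg a) (abs_nonneg _)

theorem Summable.tsum_tsum_mul_comm {W : α × β → ℝ} (hW : Summable W) {g : β → ℝ} {C : ℝ}
    (hg : ∀ b, ‖g b‖ ≤ C) :
    ∑' a, ∑' b, W (a, b) * g b = ∑' b, (∑' a, W (a, b)) * g b := by
  have hWg : Summable fun x : α × β => W x * g x.2 := hW.mul_of_norm_le fun x => hg x.2
  rw [← hWg.tsum_comm]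
  exact tsum_congr fun b => tsum_mul_right

theorem hasSum_pi_prod_of_nonneg {n : ℕ} {f : Fin n → α → ℝ} {a : Fin n → ℝ}
    (hf0 : ∀ i x, 0 ≤ f i x) (hf : ∀ i, HasSum (f i) (a i)) :
    HasSum (fun x : Fin n → α => ∏ i, f i (x i)) (∏ i, a i) := by
  induction n with
  | zero => simp
  | succ n ih =>
    have htail : HasSum (fun y : Fin n → α => ∏ i, f i.succ (y i)) (∏ i : Fin n, a i.succ) :=
      ih (fun i x => hf0 i.succ x) fun i => hf i.succ
    have hhead0 : 0 ≤ f 0 := hf0 0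
    have htail0 : 0 ≤ fun y : Fin n → α => ∏ i, f i.succ (y i) := fun y =>
      Finset.prod_nonneg fun i _ => hf0 i.succ (y i)
    have hs := (hf 0).summable.mul_of_nonneg htail.summable hhead0 htail0
    have hsplit := (hf 0).mul htail hs
    have hcons : (fun x : Fin (n + 1) → α => ∏ i, f i (x i)) ∘ Fin.consEquiv (fun _ => α) =
        fun y => f 0 y.1 * ∏ i, f i.succ (y.2 i) := by
      funext y
      simp [Fin.consEquiv, Fin.prod_univ_succ]
    rw [Fin.prod_univ_succ, ← (Fin.consEquiv fun _ => α).hasSum_iff, hcons]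
    exact hsplit

end Summation

namespace IsPMF

variable {α β : Type*} {p : α → ℝ}

theorem summable (hp : IsPMF p) : Summable p := hp.2.summable

theorem norm_tsum_mul_le (hp : IsPMF p) {g : α → ℝ} {C : ℝ} (hg : ∀ a, ‖g a‖ ≤ C) :
    ‖∑' a, p a * g a‖ ≤ C := by
  refine tsum_of_norm_bounded (by simpa using hp.2.mul_right C) fun a => ?_
  rw [norm_mul, Real.norm_of_nonneg (hp.1 a)]
  exact mul_le_mul_of_nonneg_left (hg a) (hp.1 a)

theorem compProd {K : α → β → ℝ} (hp : IsPMF p) (hK : ∀ a, IsPMF (K a)) :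
    IsPMF fun x : α × β => p x.1 * K x.1 x.2 := by
  have hfiber : ∀ a, HasSum (fun b => p a * K a b) (p a) := fun a => by
    simpa using (hK a).2.mul_left (p a)
  have hnonneg : ∀ x : α × β, 0 ≤ p x.1 * K x.1 x.2 := fun x => mul_nonneg (hp.1 _) ((hK _).1 _)
  have hsum : Summable fun x : α × β => p x.1 * K x.1 x.2 :=
    (summable_prod_of_nonneg hnonneg).2
      ⟨fun a => (hfiber a).summable, by simpa [(hfiber _).tsum_eq] using hp.summable⟩
  refine ⟨hnonneg, hsum.hasSum_iff.2 ?_⟩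
  rw [hsum.tsum_prod]
  simpa [(hfiber _).tsum_eq] using hp.2.tsum_eq

theorem prod {q : β → ℝ} (hp : IsPMF p) (hq : IsPMF q) :
    IsPMF fun x : α × β => p x.1 * q x.2 :=
  hp.compProd fun _ => hq

theorem marginal_snd {f : α × β → ℝ} (hf : IsPMF f) : IsPMF fun b => ∑' a, f (a, b) :=
  ⟨fun _ => tsum_nonneg fun _ => hf.1 _,
    ((Equiv.prodComm β α).hasSum_iff.2 hf.2).prod_fiberwise fun b =>
      (hf.summable.prod_symm.prod_factor b).hasSum⟩

theorem tsum_prod_mul_eq {q : β → ℝ} (hp : IsPMF p) (hq : IsPMF q) {g : α × β → ℝ} {C : ℝ}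
    (hg : ∀ x, ‖g x‖ ≤ C) :
    ∑' x : α × β, p x.1 * q x.2 * g x = ∑' b, q b * ∑' a, p a * g (a, b) := by
  have hs := (hp.prod hq).summable.mul_of_norm_le hg
  have hs' : Summable (Function.uncurry fun a b => p a * q b * g (a, b)) := hs
  rw [hs.tsum_prod, ← hs'.tsum_comm]
  refine tsum_congr fun b => ?_
  rw [← tsum_mul_left]
  exact tsum_congr fun a => by ring

theorem prodPMF (hP : IsPMF p) (m : ℕ) : IsPMF (prodPMF m p) :=
  ⟨fun _ => Finset.prod_nonneg fun _ _ => hP.1 _, by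
    have h : HasSum (fun S : Fin m → α => ∏ i, p (S i)) 1 := by
      simpa using hasSum_pi_prod_of_nonneg (f := fun _ : Fin m => p) (a := fun _ => 1)
        (fun _ => hP.1) fun _ => hP.2
    exact h⟩

end IsPMF

theorem tsum_mul_sub_tsum_mul_eq_tv {A : Type*} {p q ℓ : A → ℝ} (hp : IsPMF p) (hq : IsPMF q)
    (hℓ : ∀ a, ℓ a = if q a ≤ p a then 1 else 0) :
    ∑' a, p a * ℓ a - ∑' a, q a * ℓ a = tv p q := by
  have hℓ1 : ∀ a, ‖ℓ a‖ ≤ 1 := fun a => by rw [hℓ]; split_ifs <;> norm_num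
  have hmin : Summable fun a => min (p a) (q a) :=
    hp.summable.of_nonneg_of_le (fun a => le_min (hp.1 a) (hq.1 a)) fun a => min_le_left _ _
  have hpointwise : ∀ a, p a * ℓ a - q a * ℓ a = p a - min (p a) (q a) := fun a => by
    rw [hℓ]; split_ifs with h
    · rw [min_eq_right h]; ring
    · rw [min_eq_left (le_of_not_ge h)]; ring
  rw [← (hp.summable.mul_of_norm_le hℓ1).tsum_sub (hq.summable.mul_of_norm_le hℓ1),
    tsum_congr hpointwise, hp.summable.tsum_sub hmin, hp.2.tsum_eq, tv]

section LearningMachine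

variable {Z H : Type*} {m : ℕ} {P : Z → ℝ} {Q : (Fin m → Z) → H → ℝ}

noncomputable def empFreq (m : ℕ) (S : Fin m → Z) (z : Z) : ℝ :=
  haveI := Classical.decEq Z
  (1 / (m : ℝ)) * ∑ i, if S i = z then (1 : ℝ) else 0

theorem hasSum_empFreq_mul (S : Fin m → Z) (g : Z → ℝ) :
    HasSum (fun z => empFreq m S z * g z) ((1 / (m : ℝ)) * ∑ i, g (S i)) := by
  classical
  have hcoord : ∀ i, HasSum (fun z => (if S i = z then (1 : ℝ) else 0) * g z) (g (S i)) := by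
    intro i
    convert hasSum_ite_eq (S i) (g (S i)) using 1
    funext z
    split_ifs <;> simp_all
  refine ((hasSum_sum fun i _ => hcoord i).mul_left (1 / (m : ℝ))).congr_fun fun z => ?_
  simp only [empFreq, Finset.sum_mul, mul_assoc]

theorem isPMF_empFreq (hm : 1 ≤ m) (S : Fin m → Z) : IsPMF (empFreq m S) := by
  refine ⟨fun z => mul_nonneg (by positivity) (Finset.sum_nonneg fun i _ => ?_), ?_⟩
  · split_ifs <;> norm_num
  · have hm0 : (m : ℝ) ≠ 0 := by positivity
    simpa [hm0] using hasSum_empFreq_mul S fun _ => 1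

theorem hasSum_prodPMF_mul_ite [DecidableEq Z] (hP : IsPMF P) (i : Fin m) (z : Z) :
    HasSum (fun S => prodPMF m P S * if S i = z then 1 else 0) (P z) := by
  -- the i-th factor `P` of the product pmf, restricted to `{z}`
  let f : Fin m → Z → ℝ := fun j => if j = i then fun x => if x = z then P z else 0 else P
  have hf : ∀ j, HasSum (f j) (if j = i then P z else 1) := fun j => by
    by_cases hj : j = i
    · simpa [f, hj] using hasSum_ite_eq z (P z)
    · simpa [f, hj] using hP.2
  have hf0 : ∀ j x, 0 ≤ f j x := fun j x => by
    dsimp only [f]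
    split_ifs
    exacts [ite_nonneg (hP.1 z) le_rfl, hP.1 x]
  have hprod : ∀ S : Fin m → Z, ∏ j, f j (S j) = prodPMF m P S * if S i = z then 1 else 0 := by
    intro S
    by_cases hS : S i = z
    · simp only [hS, if_true, mul_one, prodPMF]
      exact Finset.prod_congr rfl fun j _ => by by_cases hj : j = i <;> simp [f, hj, ← hS]
    · simp only [hS, if_false, mul_zero]
      exact Finset.prod_eq_zero (Finset.mem_univ i) (by simp [f, hS])
  simpa [hprod] using hasSum_pi_prod_of_nonneg hf0 hf

theorem hasSum_prodPMF_mul_empFreq (hm : 1 ≤ m) (hP : IsPMF P) (z : Z) :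
    HasSum (fun S => prodPMF m P S * empFreq m S z) (P z) := by
  classical
  have hm0 : (m : ℝ) ≠ 0 := by positivity
  have key := (hasSum_sum (s := Finset.univ) fun i _ =>
    hasSum_prodPMF_mul_ite (m := m) hP i z).mul_left (1 / (m : ℝ))
  rw [Finset.sum_const, Finset.card_univ, Fintype.card_fin, nsmul_eq_mul,
    show 1 / (m : ℝ) * (m * P z) = P z by field_simp] at key
  refine key.congr_fun fun S => ?_
  simp only [empFreq, Finset.mul_sum]
  exact Finset.sum_congr rfl fun _ _ => by ring

noncomputable def jointSZH (m : ℕ) (P : Z → ℝ) (Q : (Fin m → Z) → H → ℝ)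
    (x : (Fin m → Z) × (Z × H)) : ℝ :=
  prodPMF m P x.1 * (empFreq m x.1 x.2.1 * Q x.1 x.2.2)

theorem jointZH_eq_tsum_jointSZH (z : Z) (h : H) :
    jointZH m P Q z h = ∑' S, jointSZH m P Q (S, (z, h)) :=
  tsum_congr fun _ => mul_assoc _ _ _

theorem isPMF_jointSZH (hm : 1 ≤ m) (hP : IsPMF P) (hQ : ∀ S, IsPMF (Q S)) :
    IsPMF (jointSZH m P Q) :=
  (hP.prodPMF m).compProd fun S => (isPMF_empFreq hm S).prod (hQ S)

theorem isPMF_jointZH (hm : 1 ≤ m) (hP : IsPMF P) (hQ : ∀ S, IsPMF (Q S)) :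
    IsPMF fun x : Z × H => jointZH m P Q x.1 x.2 := by
  simpa only [jointZH_eq_tsum_jointSZH] using (isPMF_jointSZH hm hP hQ).marginal_snd

theorem isPMF_margH (hm : 1 ≤ m) (hP : IsPMF P) (hQ : ∀ S, IsPMF (Q S)) :
    IsPMF (margH m P Q) :=
  (isPMF_jointZH hm hP hQ).marginal_snd

theorem margZ_eq (hm : 1 ≤ m) (hP : IsPMF P) (hQ : ∀ S, IsPMF (Q S)) (z : Z) :
    margZ m P Q z = P z := by
  have hslice : Summable fun y : (Fin m → Z) × H => jointSZH m P Q (y.1, (z, y.2)) :=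
    (isPMF_jointSZH hm hP hQ).summable.comp_injective fun x y hxy => by
      simp_all [Prod.ext_iff]
  calc margZ m P Q z = ∑' h, ∑' S, jointSZH m P Q (S, (z, h)) :=
        tsum_congr fun h => jointZH_eq_tsum_jointSZH z h
    _ = ∑' S, ∑' h, jointSZH m P Q (S, (z, h)) := hslice.tsum_comm
    _ = ∑' S, prodPMF m P S * empFreq m S z :=
        tsum_congr fun S => by simp [jointSZH, tsum_mul_left, (hQ S).2.tsum_eq]
    _ = P z := (hasSum_prodPMF_mul_empFreq hm hP z).tsum_eq

theorem margH_eq (hm : 1 ≤ m) (hP : IsPMF P) (hQ : ∀ S, IsPMF (Q S)) (h : H) :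
    margH m P Q h = ∑' S, prodPMF m P S * Q S h := by
  have hslice : Summable fun y : (Fin m → Z) × Z => jointSZH m P Q (y.1, (y.2, h)) :=
    (isPMF_jointSZH hm hP hQ).summable.comp_injective fun x y hxy => by
      simp_all [Prod.ext_iff]
  calc margH m P Q h = ∑' z, ∑' S, jointSZH m P Q (S, (z, h)) :=
        tsum_congr fun z => jointZH_eq_tsum_jointSZH z h
    _ = ∑' S, ∑' z, jointSZH m P Q (S, (z, h)) := hslice.tsum_comm
    _ = ∑' S, prodPMF m P S * Q S h := tsum_congr fun S => by
        simp only [jointSZH, tsum_mul_left, tsum_mul_right, (isPMF_empFreq hm S).2.tsum_eq,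
          one_mul]

theorem trueRisk_eq (hm : 1 ≤ m) (hP : IsPMF P) (hQ : ∀ S, IsPMF (Q S)) {L : H → Z → ℝ}
    {C : ℝ} (hL : ∀ h z, ‖L h z‖ ≤ C) :
    trueRisk m P Q L = ∑' x : Z × H, P x.1 * margH m P Q x.2 * L x.2 x.1 := by
  calc trueRisk m P Q L = ∑' S, ∑' h, prodPMF m P S * Q S h * ∑' z, P z * L h z :=
        tsum_congr fun S => by simp only [← tsum_mul_left, mul_assoc]
    _ = ∑' h, (∑' S, prodPMF m P S * Q S h) * ∑' z, P z * L h z :=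
        ((hP.prodPMF m).compProd hQ).summable.tsum_tsum_mul_comm fun h =>
          hP.norm_tsum_mul_le (hL h)
    _ = ∑' h, margH m P Q h * ∑' z, P z * L h z :=
        tsum_congr fun h => by rw [margH_eq hm hP hQ]
    _ = _ := (hP.tsum_prod_mul_eq (isPMF_margH hm hP hQ) fun x => hL x.2 x.1).symm

theorem empRisk_eq (hm : 1 ≤ m) (hP : IsPMF P) (hQ : ∀ S, IsPMF (Q S)) {L : H → Z → ℝ}
    {C : ℝ} (hL : ∀ h z, ‖L h z‖ ≤ C) :
    empRisk m P Q L = ∑' x : Z × H, jointZH m P Q x.1 x.2 * L x.2 x.1 := by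
  have hinner : ∀ S, prodPMF m P S * ∑' h, Q S h * ((1 / (m : ℝ)) * ∑ i, L h (S i)) =
      ∑' x : Z × H, jointSZH m P Q (S, x) * L x.2 x.1 := fun S => by
    calc prodPMF m P S * ∑' h, Q S h * ((1 / (m : ℝ)) * ∑ i, L h (S i))
        = prodPMF m P S * ∑' x : Z × H, empFreq m S x.1 * Q S x.2 * L x.2 x.1 := by
          rw [(isPMF_empFreq hm S).tsum_prod_mul_eq (hQ S) fun x => hL x.2 x.1]
          simp only [(hasSum_empFreq_mul S _).tsum_eq]
      _ = _ := by
          rw [← tsum_mul_left]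
          exact tsum_congr fun x => by simp only [jointSZH]; ring
  calc empRisk m P Q L = ∑' S, ∑' x : Z × H, jointSZH m P Q (S, x) * L x.2 x.1 :=
        tsum_congr hinner
    _ = ∑' x : Z × H, (∑' S, jointSZH m P Q (S, x)) * L x.2 x.1 :=
        (isPMF_jointSZH hm hP hQ).summable.tsum_tsum_mul_comm fun x => hL x.2 x.1
    _ = _ := tsum_congr fun x => by rw [jointZH_eq_tsum_jointSZH]

end LearningMachine

theorem stmt9_general {Z H : Type*} (m : ℕ) (hm : 1 ≤ m)
    (P : Z → ℝ) (hP : IsPMF P)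
    (Q : (Fin m → Z) → H → ℝ) (hQ : ∀ S, IsPMF (Q S))
    (L : H → Z → ℝ)
    (hLdef : ∀ h z, L h z =
      if jointZH m P Q z h ≤ margZ m P Q z * margH m P Q h then 1 else 0) :
    (∀ h z, 0 ≤ L h z ∧ L h z ≤ 1) ∧
      trueRisk m P Q L - empRisk m P Q L = affinity m P Q := by
  have hL01 : ∀ h z, 0 ≤ L h z ∧ L h z ≤ 1 := fun h z => by
    rw [hLdef]
    split_ifs <;> norm_num
  have hL : ∀ h z, ‖L h z‖ ≤ 1 := fun h z => by
    rw [Real.norm_of_nonneg (hL01 h z).1]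
    exact (hL01 h z).2
  refine ⟨hL01, ?_⟩
  rw [trueRisk_eq hm hP hQ hL, empRisk_eq hm hP hQ hL, affinity]
  simp only [margZ_eq hm hP hQ]
  exact tsum_mul_sub_tsum_mul_eq_tv (hP.prod (isPMF_margH hm hP hQ)) (isPMF_jointZH hm hP hQ)
    fun x => by rw [hLdef, margZ_eq hm hP hQ]

/-- Theorem 1, tightness: the loss
`L⋆(h,z) = 1{μ_Z(z)·μ_H(h) ≥ μ(z,h)}` takes values in `[0,1]` and achieves
`R - R_emp = I(Z_trn, H)`. -/
theorem stmt9 {Z H : Type*} [Countable Z] [Countable H] (m : ℕ) (hm : 1 ≤ m)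
    (P : Z → ℝ) (hP : IsPMF P)
    (Q : (Fin m → Z) → H → ℝ) (hQ : ∀ S, IsPMF (Q S))
    (L : H → Z → ℝ)
    (hLdef : ∀ h z, L h z =
      if jointZH m P Q z h ≤ margZ m P Q z * margH m P Q h then 1 else 0) :
    (∀ h z, 0 ≤ L h z ∧ L h z ≤ 1) ∧
      trueRisk m P Q L - empRisk m P Q L = affinity m P Q :=
  stmt9_general m hm P hP Q hQ L hLdef
end

section
/- (Theorem 4: partial order of learning machines.) Let Z, H₁, H₂ be countable alphabets, m ≥ 1, let Q₁ be a learning kernel from Z^m to pmfs on H₁, let K be a kernel assigning to each h₁ ∈ H₁ a pmf K(·|h₁) on H₂, and let Q₂(h₂|S) = ∑_{h₁} Q₁(h₁|S)·K(h₂|h₁) (so the second machine can be completely simulated by the first, i.e., S → H₁ → H₂ is a Markov chain). Then for every probability mass function P on Z, the mutual affinities satisfy I(Z_trn, H₂) ≤ I(Z_trn, H₁), and consequently the learning capacities satisfy C^(m)(Q₂) ≤ C^(m)(Q₁). -/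
/-! ### Auxiliary lemmas -/

section Aux

lemma isPMF_le_one {A : Type*} {p : A → ℝ} (hp : IsPMF p) (a : A) : p a ≤ 1 :=
  le_hasSum hp.2 a fun j _ => hp.1 j

lemma prodPMF_nonneg {Z : Type*} (m : ℕ) {P : Z → ℝ} (hP : ∀ z, 0 ≤ P z)
    (S : Fin m → Z) : 0 ≤ prodPMF m P S :=
  Finset.prod_nonneg fun i _ => hP _

lemma summable_prodPMF {Z : Type*} (m : ℕ) {P : Z → ℝ} (hP : IsPMF P) :
    Summable (prodPMF m P) := by
  induction m with
  | zero => exact Summable.of_finite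
  | succ n ih =>
    have h : Summable fun x : Z × (Fin n → Z) => P x.1 * prodPMF n P x.2 :=
      Summable.mul_of_nonneg hP.2.summable ih (fun z => hP.1 z)
        (fun S => prodPMF_nonneg n hP.1 S)
    refine ((Fin.consEquiv (fun _ : Fin (n + 1) => Z)).summable_iff
      (f := prodPMF (n + 1) P)).mp (h.congr fun x => ?_)
    show P x.1 * prodPMF n P x.2 = prodPMF (n + 1) P (Fin.cons x.1 x.2)
    simp [prodPMF, Fin.prod_univ_succ]

/-- Composing a summable nonnegative weight with a pmf-kernel: joint summability. -/
lemma summable_kernel_pair {α β : Type*} {p : α → ℝ} (hps : Summable p)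
    (hpn : ∀ a, 0 ≤ p a) {K : α → β → ℝ} (hK : ∀ a, IsPMF (K a)) :
    Summable fun q : α × β => p q.1 * K q.1 q.2 := by
  set f : α × β → ℝ := fun q => p q.1 * K q.1 q.2 with hf
  have hnn : 0 ≤ f := fun q => mul_nonneg (hpn q.1) ((hK q.1).1 q.2)
  rw [summable_prod_of_nonneg hnn]
  constructor
  · intro a
    have h1 : (fun y => f (a, y)) = fun y => p a * K a y := rfl
    rw [h1]
    exact ((hK a).2.summable).mul_left _
  · have h2 : (fun a => ∑' y, f (a, y)) = fun a => p a * ∑' y, K a y := by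
      funext a
      simp only [hf]
      exact tsum_mul_left
    rw [h2]
    exact hps.congr fun a => by rw [(hK a).2.tsum_eq, mul_one]

/-- Composing a summable nonnegative weight with a pmf-kernel: the composite is summable. -/
lemma summable_kernel_comp {α β : Type*} {p : α → ℝ} (hps : Summable p)
    (hpn : ∀ a, 0 ≤ p a) {K : α → β → ℝ} (hK : ∀ a, IsPMF (K a)) :
    Summable fun b => ∑' a, p a * K a b := by
  have h := (summable_kernel_pair hps hpn hK).prod_symm
  exact ((summable_prod_of_nonneg fun q : β × α =>
    mul_nonneg (hpn q.2) ((hK q.2).1 q.1)).mp h).2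

/-- Mass preservation of a pmf-kernel. -/
lemma tsum_kernel_comp {α β : Type*} {p : α → ℝ} (hps : Summable p)
    (hpn : ∀ a, 0 ≤ p a) {K : α → β → ℝ} (hK : ∀ a, IsPMF (K a)) :
    ∑' b, ∑' a, p a * K a b = ∑' a, p a := by
  have h : Summable (Function.uncurry fun a b => p a * K a b) :=
    summable_kernel_pair hps hpn hK
  rw [Summable.tsum_comm h]
  exact tsum_congr fun a => by rw [tsum_mul_left, (hK a).2.tsum_eq, mul_one]

/-- Swap a double sum against a bounded nonnegative multiplier. -/
lemma tsum_swap_kernel {α β : Type*} {F : α → β → ℝ} (hFnn : ∀ a b, 0 ≤ F a b)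
    (hF : Summable fun q : α × β => F q.1 q.2) {c : β → ℝ}
    (hc0 : ∀ b, 0 ≤ c b) (hc1 : ∀ b, c b ≤ 1) :
    ∑' a, ∑' b, F a b * c b = ∑' b, (∑' a, F a b) * c b := by
  have hs : Summable (Function.uncurry fun a b => F a b * c b) := by
    refine hF.of_nonneg_of_le (fun q => mul_nonneg (hFnn q.1 q.2) (hc0 q.2)) fun q => ?_
    calc F q.1 q.2 * c q.2 ≤ F q.1 q.2 * 1 :=
          mul_le_mul_of_nonneg_left (hc1 q.2) (hFnn q.1 q.2)
      _ = F q.1 q.2 := mul_one _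
  rw [← Summable.tsum_comm hs]
  exact tsum_congr fun b => tsum_mul_right

/-- Data processing inequality for total variation along a pmf-kernel. -/
lemma tv_dpi {Z' H₁' H₂' : Type*} {p q : Z' × H₁' → ℝ}
    (hpn : ∀ x, 0 ≤ p x) (hqn : ∀ x, 0 ≤ q x)
    (hps : Summable p) (hqs : Summable q)
    {K : H₁' → H₂' → ℝ} (hK : ∀ h, IsPMF (K h)) :
    tv (fun x : Z' × H₂' => ∑' h₁, p (x.1, h₁) * K h₁ x.2)
       (fun x : Z' × H₂' => ∑' h₁, q (x.1, h₁) * K h₁ x.2) ≤ tv p q := by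
  set r : Z' × H₁' → ℝ := fun x => min (p x) (q x) with hrdef
  have hrn : ∀ x, 0 ≤ r x := fun x => le_min (hpn x) (hqn x)
  have hrp : ∀ x, r x ≤ p x := fun x => min_le_left _ _
  have hrq : ∀ x, r x ≤ q x := fun x => min_le_right _ _
  have hrs : Summable r := hps.of_nonneg_of_le hrn hrp
  have hslice : ∀ (u : Z' × H₁' → ℝ), (∀ x, 0 ≤ u x) → Summable u →
      ∀ (z : Z') (h₂ : H₂'), Summable fun h₁ => u (z, h₁) * K h₁ h₂ := by
    intro u hun hus z h₂
    refine (hus.prod_factor z).of_nonneg_of_le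
      (fun h₁ => mul_nonneg (hun _) ((hK h₁).1 _)) fun h₁ => ?_
    calc u (z, h₁) * K h₁ h₂ ≤ u (z, h₁) * 1 :=
          mul_le_mul_of_nonneg_left (isPMF_le_one (hK h₁) h₂) (hun _)
      _ = u (z, h₁) := mul_one _
  have hchnn : ∀ (u : Z' × H₁' → ℝ), (∀ x, 0 ≤ u x) →
      ∀ x : Z' × H₂', 0 ≤ ∑' h₁, u (x.1, h₁) * K h₁ x.2 :=
    fun u hun x => tsum_nonneg fun h₁ => mul_nonneg (hun _) ((hK h₁).1 _)
  have hchs : ∀ (u : Z' × H₁' → ℝ), (∀ x, 0 ≤ u x) → Summable u →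
      Summable fun x : Z' × H₂' => ∑' h₁, u (x.1, h₁) * K h₁ x.2 := by
    intro u hun hus
    rw [summable_prod_of_nonneg fun x => hchnn u hun x]
    constructor
    · intro z
      exact summable_kernel_comp (hus.prod_factor z) (fun h₁ => hun (z, h₁)) hK
    · refine hus.prod.congr fun z => ?_
      exact (tsum_kernel_comp (hus.prod_factor z) (fun h₁ => hun (z, h₁)) hK).symm
  have hmono : ∀ (u v : Z' × H₁' → ℝ), (∀ x, 0 ≤ u x) → (∀ x, 0 ≤ v x) →
      (∀ x, u x ≤ v x) → Summable u → Summable v →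
      ∀ x : Z' × H₂', (∑' h₁, u (x.1, h₁) * K h₁ x.2) ≤ ∑' h₁, v (x.1, h₁) * K h₁ x.2 := by
    intro u v hun hvn huv hus hvs x
    exact Summable.tsum_le_tsum (fun h₁ => mul_le_mul_of_nonneg_right (huv _) ((hK h₁).1 _))
      (hslice u hun hus x.1 x.2) (hslice v hvn hvs x.1 x.2)
  have hgle : ∀ x : Z' × H₂', (∑' h₁, r (x.1, h₁) * K h₁ x.2) ≤
      min (∑' h₁, p (x.1, h₁) * K h₁ x.2) (∑' h₁, q (x.1, h₁) * K h₁ x.2) :=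
    fun x => le_min (hmono r p hrn hpn hrp hrs hps x) (hmono r q hrn hqn hrq hrs hqs x)
  have hps' := hchs p hpn hps
  have hgs := hchs r hrn hrs
  have hmins : Summable fun x : Z' × H₂' =>
      min (∑' h₁, p (x.1, h₁) * K h₁ x.2) (∑' h₁, q (x.1, h₁) * K h₁ x.2) :=
    hps'.of_nonneg_of_le (fun x => le_min (hchnn p hpn x) (hchnn q hqn x))
      fun x => min_le_left _ _
  have htsumg : ∑' x : Z' × H₂', (∑' h₁, r (x.1, h₁) * K h₁ x.2) = ∑' x, r x := by
    rw [Summable.tsum_prod hgs, Summable.tsum_prod hrs]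
    exact tsum_congr fun z =>
      tsum_kernel_comp (hrs.prod_factor z) (fun h₁ => hrn (z, h₁)) hK
  have hkey : ∑' x, r x ≤ ∑' x : Z' × H₂',
      min (∑' h₁, p (x.1, h₁) * K h₁ x.2) (∑' h₁, q (x.1, h₁) * K h₁ x.2) := by
    rw [← htsumg]
    exact Summable.tsum_le_tsum hgle hgs hmins
  unfold tv
  linarith [hkey]

lemma jointZH_nonneg {Z H : Type*} (m : ℕ) {P : Z → ℝ} (hPn : ∀ z, 0 ≤ P z)
    {Q : (Fin m → Z) → H → ℝ} (hQn : ∀ S h, 0 ≤ Q S h) (z : Z) (h : H) :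
    0 ≤ jointZH m P Q z h := by
  refine tsum_nonneg fun S => ?_
  refine mul_nonneg (mul_nonneg (prodPMF_nonneg m hPn S) (mul_nonneg (by positivity)
    (Finset.sum_nonneg fun i _ => ?_))) (hQn S h)
  split <;> norm_num

lemma affinity_le_one {Z H : Type*} (m : ℕ) {P : Z → ℝ} (hPn : ∀ z, 0 ≤ P z)
    {Q : (Fin m → Z) → H → ℝ} (hQn : ∀ S h, 0 ≤ Q S h) : affinity m P Q ≤ 1 := by
  unfold affinity tv
  have hJnn : ∀ z h, 0 ≤ jointZH m P Q z h := jointZH_nonneg m hPn hQn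
  have h0 : (0:ℝ) ≤ ∑' x : Z × H,
      min (margZ m P Q x.1 * margH m P Q x.2) (jointZH m P Q x.1 x.2) :=
    tsum_nonneg fun x => le_min (mul_nonneg (tsum_nonneg fun h => hJnn x.1 h)
      (tsum_nonneg fun z => hJnn z x.2)) (hJnn x.1 x.2)
  linarith

end Aux

/-- Theorem 4, partial order of learning machines: if the second
machine `Q₂` can be completely simulated by the first, i.e. `Q₂ = Q₁ ∘ K` for a
kernel `K` (so `S → H₁ → H₂` is a Markov chain), then for every pmf `P` of
observations `I(Z_trn, H₂) ≤ I(Z_trn, H₁)`, and `C^(m)(Q₂) ≤ C^(m)(Q₁)`. -/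
theorem stmt12 {Z H₁ H₂ : Type*} [Countable Z] [Countable H₁] [Countable H₂]
    (m : ℕ) (hm : 1 ≤ m)
    (Q₁ : (Fin m → Z) → H₁ → ℝ) (hQ₁ : ∀ S, IsPMF (Q₁ S))
    (K : H₁ → H₂ → ℝ) (hK : ∀ h₁, IsPMF (K h₁))
    (Q₂ : (Fin m → Z) → H₂ → ℝ)
    (hQ₂ : ∀ S h₂, Q₂ S h₂ = ∑' h₁, Q₁ S h₁ * K h₁ h₂) :
    (∀ P : Z → ℝ, IsPMF P → affinity m P Q₂ ≤ affinity m P Q₁) ∧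
      capacity m Q₂ ≤ capacity m Q₁ := by
  letI := Classical.decEq Z
  have hQ2pmf : ∀ S, IsPMF (Q₂ S) := by
    intro S
    constructor
    · intro h₂; rw [hQ₂]
      exact tsum_nonneg fun h₁ => mul_nonneg ((hQ₁ S).1 h₁) ((hK h₁).1 h₂)
    · have hsum : Summable (Q₂ S) :=
        (summable_kernel_comp (hQ₁ S).2.summable (hQ₁ S).1 hK).congr
          fun h₂ => (hQ₂ S h₂).symm
      rw [hsum.hasSum_iff]
      calc ∑' h₂, Q₂ S h₂ = ∑' h₂, ∑' h₁, Q₁ S h₁ * K h₁ h₂ :=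
            tsum_congr fun h₂ => hQ₂ S h₂
        _ = ∑' h₁, Q₁ S h₁ := tsum_kernel_comp (hQ₁ S).2.summable (hQ₁ S).1 hK
        _ = 1 := (hQ₁ S).2.tsum_eq
  have haff : ∀ P : Z → ℝ, IsPMF P → affinity m P Q₂ ≤ affinity m P Q₁ := by
    intro P hP
    have hPn := hP.1
    have hmpos : (0:ℝ) < m := by exact_mod_cast Nat.lt_of_lt_of_le Nat.zero_lt_one hm
    let A : (Fin m → Z) → Z → ℝ := fun S z =>
      prodPMF m P S * ((1 / (m : ℝ)) * ∑ i, if S i = z then (1:ℝ) else 0)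
    have hAdef : A = fun S z =>
      prodPMF m P S * ((1 / (m : ℝ)) * ∑ i, if S i = z then (1:ℝ) else 0) := rfl
    have hprodnn : ∀ S, 0 ≤ prodPMF m P S := fun S => prodPMF_nonneg m hPn S
    have hAnn : ∀ S z, 0 ≤ A S z := by
      intro S z
      refine mul_nonneg (hprodnn S) (mul_nonneg (by positivity)
        (Finset.sum_nonneg fun i _ => ?_))
      split <;> norm_num
    have hwle : ∀ (S : Fin m → Z) (z : Z),
        (1 / (m:ℝ)) * ∑ i, (if S i = z then (1:ℝ) else 0) ≤ 1 := by
      intro S z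
      have hsle : (∑ i, if S i = z then (1:ℝ) else 0) ≤ (m : ℝ) := by
        calc (∑ i, if S i = z then (1:ℝ) else 0) ≤ ∑ _i : Fin m, (1:ℝ) :=
              Finset.sum_le_sum fun i _ => by split <;> norm_num
          _ = (m : ℝ) := by simp
      calc (1 / (m:ℝ)) * ∑ i, (if S i = z then (1:ℝ) else 0)
          ≤ (1 / (m:ℝ)) * (m:ℝ) := by
            apply mul_le_mul_of_nonneg_left hsle
            positivity
        _ = 1 := by field_simp
    have hAle : ∀ S z, A S z ≤ prodPMF m P S := by
      intro S z
      calc A S z ≤ prodPMF m P S * 1 :=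
            mul_le_mul_of_nonneg_left (hwle S z) (hprodnn S)
        _ = prodPMF m P S := mul_one _
    have hAsumS : ∀ z, Summable fun S => A S z := fun z =>
      (summable_prodPMF m hP).of_nonneg_of_le (fun S => hAnn S z) (fun S => hAle S z)
    have hone : ∀ (S : Fin m → Z) (i : Fin m),
        HasSum (fun z => if S i = z then (1:ℝ) else 0) 1 := by
      intro S i
      have h2 : (fun z => if S i = z then (1:ℝ) else 0)
          = fun z => if z = S i then (1:ℝ) else 0 := by
        funext z; exact if_congr eq_comm rfl rfl
      rw [h2]
      exact hasSum_ite_eq (S i) 1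
    have htsumAz : ∀ S, ∑' z, A S z = prodPMF m P S := by
      intro S
      have hre : ∀ z, A S z = (prodPMF m P S * (1/(m:ℝ)))
          * ∑ i, (if S i = z then (1:ℝ) else 0) := by
        intro z; rw [hAdef]; ring
      rw [tsum_congr hre, tsum_mul_left, Summable.tsum_finsetSum fun i _ => (hone S i).summable]
      have hms : ∑ i : Fin m, ∑' z, (if S i = z then (1:ℝ) else 0) = (m:ℝ) := by
        rw [Finset.sum_congr rfl fun i _ => (hone S i).tsum_eq]
        simp
      rw [hms]
      field_simp
    have hApair : Summable fun x : (Fin m → Z) × Z => A x.1 x.2 := by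
      rw [summable_prod_of_nonneg fun x => hAnn x.1 x.2]
      constructor
      · intro S
        apply summable_of_ne_finset_zero (s := Finset.univ.image S)
        intro z hz
        have hzero : ∀ i : Fin m, (if S i = z then (1:ℝ) else 0) = 0 := fun i => by
          rw [if_neg]
          exact fun h => hz (Finset.mem_image.mpr ⟨i, Finset.mem_univ i, h⟩)
        rw [hAdef]
        dsimp only
        rw [Finset.sum_congr rfl fun i _ => hzero i]
        simp
      · exact (summable_prodPMF m hP).congr fun S => (htsumAz S).symm
    have hJ1 : ∀ (z : Z) (h : H₁), jointZH m P Q₁ z h = ∑' S, A S z * Q₁ S h :=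
      fun z h => rfl
    have hJ2 : ∀ (z : Z) (h : H₂), jointZH m P Q₂ z h = ∑' S, A S z * Q₂ S h :=
      fun z h => rfl
    have hJ1nn : ∀ z h, 0 ≤ jointZH m P Q₁ z h :=
      jointZH_nonneg m hPn fun S h => (hQ₁ S).1 h
    have hAQpair : ∀ z, Summable fun x : (Fin m → Z) × H₁ => A x.1 z * Q₁ x.1 x.2 :=
      fun z => summable_kernel_pair (hAsumS z) (fun S => hAnn S z) hQ₁
    have hJ1slice : ∀ z, Summable fun h₁ => jointZH m P Q₁ z h₁ := fun z =>
      (summable_kernel_comp (hAsumS z) (fun S => hAnn S z) hQ₁).congr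
        fun h₁ => (hJ1 z h₁).symm
    have hmargZ1 : ∀ z, margZ m P Q₁ z = ∑' S, A S z := by
      intro z
      calc margZ m P Q₁ z = ∑' h₁, ∑' S, A S z * Q₁ S h₁ :=
            tsum_congr fun h₁ => hJ1 z h₁
        _ = ∑' S, A S z := tsum_kernel_comp (hAsumS z) (fun S => hAnn S z) hQ₁
    have hmargZ2 : ∀ z, margZ m P Q₂ z = ∑' S, A S z := by
      intro z
      calc margZ m P Q₂ z = ∑' h₂, ∑' S, A S z * Q₂ S h₂ :=
            tsum_congr fun h₂ => hJ2 z h₂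
        _ = ∑' S, A S z := tsum_kernel_comp (hAsumS z) (fun S => hAnn S z) hQ2pmf
    have hmargZeq : ∀ z, margZ m P Q₂ z = margZ m P Q₁ z := fun z => by
      rw [hmargZ2 z, hmargZ1 z]
    have hmargZs : Summable fun z => margZ m P Q₁ z := by
      have h := hApair.prod_symm.prod
      exact h.congr fun z => (hmargZ1 z).symm
    have hJ1pair : Summable fun x : Z × H₁ => jointZH m P Q₁ x.1 x.2 := by
      rw [summable_prod_of_nonneg fun x => hJ1nn x.1 x.2]
      exact ⟨fun z => hJ1slice z, hmargZs⟩
    have hmargH1s : Summable fun h₁ => margH m P Q₁ h₁ := hJ1pair.prod_symm.prod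
    have hmargZnn : ∀ z, 0 ≤ margZ m P Q₁ z := fun z =>
      tsum_nonneg fun h₁ => hJ1nn z h₁
    have hmargHnn : ∀ h₁, 0 ≤ margH m P Q₁ h₁ := fun h₁ =>
      tsum_nonneg fun z => hJ1nn z h₁
    have hJchan : ∀ (x : Z × H₂),
        jointZH m P Q₂ x.1 x.2 = ∑' h₁, jointZH m P Q₁ x.1 h₁ * K h₁ x.2 := by
      rintro ⟨z, h₂⟩
      rw [hJ2 z h₂]
      calc ∑' S, A S z * Q₂ S h₂
          = ∑' S, ∑' h₁, (A S z * Q₁ S h₁) * K h₁ h₂ := by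
            refine tsum_congr fun S => ?_
            rw [hQ₂ S h₂, ← tsum_mul_left]
            exact tsum_congr fun h₁ => (mul_assoc _ _ _).symm
        _ = ∑' h₁, (∑' S, A S z * Q₁ S h₁) * K h₁ h₂ :=
            tsum_swap_kernel (fun S h₁ => mul_nonneg (hAnn S z) ((hQ₁ S).1 h₁))
              (hAQpair z) (fun h₁ => (hK h₁).1 h₂) (fun h₁ => isPMF_le_one (hK h₁) h₂)
        _ = ∑' h₁, jointZH m P Q₁ z h₁ * K h₁ h₂ :=
            tsum_congr fun h₁ => by rw [hJ1 z h₁]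
    have hmargHchan : ∀ h₂, margH m P Q₂ h₂ = ∑' h₁, margH m P Q₁ h₁ * K h₁ h₂ := by
      intro h₂
      calc margH m P Q₂ h₂
          = ∑' z, ∑' h₁, jointZH m P Q₁ z h₁ * K h₁ h₂ :=
            tsum_congr fun z => hJchan (z, h₂)
        _ = ∑' h₁, (∑' z, jointZH m P Q₁ z h₁) * K h₁ h₂ :=
            tsum_swap_kernel (fun z h₁ => hJ1nn z h₁) hJ1pair
              (fun h₁ => (hK h₁).1 h₂) (fun h₁ => isPMF_le_one (hK h₁) h₂)
        _ = ∑' h₁, margH m P Q₁ h₁ * K h₁ h₂ := rfl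
    have hprodchan : ∀ x : Z × H₂, margZ m P Q₂ x.1 * margH m P Q₂ x.2
        = ∑' h₁, (margZ m P Q₁ x.1 * margH m P Q₁ h₁) * K h₁ x.2 := by
      rintro ⟨z, h₂⟩
      dsimp only
      rw [hmargZeq z, hmargHchan h₂, ← tsum_mul_left]
      exact tsum_congr fun h₁ => (mul_assoc _ _ _).symm
    have hprodpair : Summable fun x : Z × H₁ => margZ m P Q₁ x.1 * margH m P Q₁ x.2 :=
      Summable.mul_of_nonneg hmargZs hmargH1s (fun z => hmargZnn z) (fun h => hmargHnn h)
    have hdpi := tv_dpi (p := fun x : Z × H₁ => margZ m P Q₁ x.1 * margH m P Q₁ x.2)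
      (q := fun x : Z × H₁ => jointZH m P Q₁ x.1 x.2)
      (fun x => mul_nonneg (hmargZnn x.1) (hmargHnn x.2)) (fun x => hJ1nn x.1 x.2)
      hprodpair hJ1pair hK
    have e1 : (fun x : Z × H₂ => margZ m P Q₂ x.1 * margH m P Q₂ x.2)
        = fun x : Z × H₂ => ∑' h₁,
            (fun y : Z × H₁ => margZ m P Q₁ y.1 * margH m P Q₁ y.2) (x.1, h₁) * K h₁ x.2 :=
      funext fun x => hprodchan x
    have e2 : (fun x : Z × H₂ => jointZH m P Q₂ x.1 x.2)
        = fun x : Z × H₂ => ∑' h₁,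
            (fun y : Z × H₁ => jointZH m P Q₁ y.1 y.2) (x.1, h₁) * K h₁ x.2 :=
      funext fun x => hJchan x
    rw [affinity, affinity, e1, e2]
    exact hdpi
  refine ⟨haff, ?_⟩
  by_cases hex : ∃ P : Z → ℝ, IsPMF P
  · obtain ⟨P₀, hP₀⟩ := hex
    have hbdd : BddAbove {c : ℝ | ∃ P : Z → ℝ, IsPMF P ∧ c = affinity m P Q₁} := by
      refine ⟨1, ?_⟩
      rintro c ⟨P, hP, rfl⟩
      exact affinity_le_one m hP.1 fun S h => (hQ₁ S).1 h
    refine csSup_le ⟨affinity m P₀ Q₂, P₀, hP₀, rfl⟩ ?_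
    rintro c ⟨P, hP, rfl⟩
    exact (haff P hP).trans (le_csSup hbdd ⟨P, hP, rfl⟩)
  · have h1 : {c : ℝ | ∃ P : Z → ℝ, IsPMF P ∧ c = affinity m P Q₂} = ∅ := by
      ext c
      simp only [Set.mem_setOf_eq, Set.mem_empty_iff_false, iff_false, not_exists]
      exact fun P hP => absurd ⟨P, hP.1⟩ hex
    have h2 : {c : ℝ | ∃ P : Z → ℝ, IsPMF P ∧ c = affinity m P Q₁} = ∅ := by
      ext c
      simp only [Set.mem_setOf_eq, Set.mem_empty_iff_false, iff_false, not_exists]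
      exact fun P hP => absurd ⟨P, hP.1⟩ hex
    rw [capacity, capacity, h1, h2]
end

section
/- (Corollary 2, stability bound.) Let μ be a joint probability mass function on 𝒳 × 𝒴 for countable alphabets 𝒳, 𝒴, with marginals μ_X and μ_Y. Then the averaged similarity between the marginal and the conditionals is at least the collision probability of μ_X: ∑_{y : μ_Y(y)>0} μ_Y(y) · ⟨μ_X, μ_{X|Y=y}⟩ ≥ ∑_{x} μ_X(x)², where μ_{X|Y=y}(x) = μ(x,y)/μ_Y(y). (Applied with X = H the inferred hypothesis and Y = Z_trn a training example, this says the stability s^(m) of a learning machine is at least the probability that two independent runs produce the same hypothesis.) -/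
set_option maxHeartbeats 1000000


/-- Similarity (overlapping coefficient) between two pmfs: `∑ min`. -/
noncomputable def similarity {A : Type*} (p q : A → ℝ) : ℝ := ∑' a, min (p a) (q a)

/-- Corollary 2, stability bound: the `μ_Y`-averaged similarity
between the marginal `μ_X` and the conditionals `μ_{X|Y=y}` is at least the
collision probability `∑_x μ_X(x)²`. -/
theorem stmt13 {X Y : Type*} [Countable X] [Countable Y] (μ : X × Y → ℝ)
    (h0 : ∀ p, 0 ≤ μ p) (h1 : HasSum μ 1)
    (μX : X → ℝ) (hμX : ∀ x, μX x = ∑' y, μ (x, y))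
    (μY : Y → ℝ) (hμY : ∀ y, μY y = ∑' x, μ (x, y)) :
    (∑' y, if 0 < μY y then
        μY y * similarity μX (fun x => μ (x, y) / μY y) else 0) ≥
      ∑' x, (μX x) ^ 2 := by
  have hsum : Summable μ := h1.summable
  have hsx : ∀ y, Summable fun x => μ (x, y) := fun y =>
    hsum.comp_injective (fun a b h => by simpa using congrArg Prod.fst h)
  have hsy : ∀ x, Summable fun y => μ (x, y) := fun x => hsum.prod_factor x
  have hμXnn : ∀ x, 0 ≤ μX x := fun x => by
    rw [hμX x]; exact tsum_nonneg fun y => h0 _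
  have hμYnn : ∀ y, 0 ≤ μY y := fun y => by
    rw [hμY y]; exact tsum_nonneg fun x => h0 _
  have hμle : ∀ x y, μ (x, y) ≤ μY y := fun x y => by
    rw [hμY y]; exact Summable.le_tsum (hsx y) x fun x' _ => h0 _
  have hμX1 : ∀ x, μX x ≤ 1 := fun x => by
    rw [hμX x, ← h1.tsum_eq]
    exact Summable.tsum_le_tsum_of_inj (fun y => (x, y))
      (fun a b h => by simpa using congrArg Prod.snd h)
      (fun p _ => h0 p) (fun y => le_rfl) (hsy x) hsum
  -- the uncurried lower-bound function
  have hg2 : Summable fun p : X × Y => μX p.1 * μ p := by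
    apply Summable.of_nonneg_of_le (fun p => mul_nonneg (hμXnn _) (h0 p))
      (fun p => ?_) hsum
    calc μX p.1 * μ p ≤ 1 * μ p :=
          mul_le_mul_of_nonneg_right (hμX1 _) (h0 p)
      _ = μ p := one_mul _
  have hgy : ∀ y, Summable fun x => μX x * μ (x, y) := fun y =>
    Summable.of_nonneg_of_le (fun x => mul_nonneg (hμXnn x) (h0 _))
      (fun x => by
        calc μX x * μ (x, y) ≤ 1 * μ (x, y) :=
              mul_le_mul_of_nonneg_right (hμX1 x) (h0 _)
          _ = μ (x, y) := one_mul _) (hsx y)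
  -- pointwise bound on terms
  have key : ∀ y, (∑' x, μX x * μ (x, y)) ≤
      (if 0 < μY y then μY y * similarity μX (fun x => μ (x, y) / μY y) else 0) := by
    intro y
    by_cases hy : 0 < μY y
    · have hmins : Summable fun x => min (μX x) (μ (x, y) / μY y) :=
        Summable.of_nonneg_of_le
          (fun x => le_min (hμXnn x) (div_nonneg (h0 _) (hμYnn y)))
          (fun x => min_le_right _ _) ((hsx y).div_const _)
      rw [if_pos hy, similarity, ← tsum_mul_left]
      refine Summable.tsum_le_tsum (fun x => ?_) (hgy y) (hmins.mul_left _)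
      rcases le_total (μX x) (μ (x, y) / μY y) with h | h
      · calc μX x * μ (x, y) ≤ μX x * μY y :=
              mul_le_mul_of_nonneg_left (hμle x y) (hμXnn x)
          _ = μY y * μX x := mul_comm _ _
          _ = μY y * min (μX x) (μ (x, y) / μY y) := by rw [min_eq_left h]
      · calc μX x * μ (x, y) ≤ 1 * μ (x, y) :=
              mul_le_mul_of_nonneg_right (hμX1 x) (h0 _)
          _ = μY y * (μ (x, y) / μY y) := by field_simp
          _ = μY y * min (μX x) (μ (x, y) / μY y) := by rw [min_eq_right h]
    · rw [if_neg hy]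
      have hy0 : μY y = 0 := le_antisymm (not_lt.1 hy) (hμYnn y)
      have hz : ∀ x, μ (x, y) = 0 := fun x =>
        le_antisymm (hy0 ▸ hμle x y) (h0 _)
      simp [hz]
  calc ∑' x, (μX x) ^ 2 = ∑' x, ∑' y, μX x * μ (x, y) := by
        refine tsum_congr fun x => ?_
        rw [tsum_mul_left, ← hμX x, sq]
    _ = ∑' y, ∑' x, μX x * μ (x, y) :=
        (Summable.tsum_comm (f := fun x y => μX x * μ (x, y)) hg2).symm
    _ ≤ _ := by
        refine Summable.tsum_le_tsum key (hg2.prod_symm.prod) ?_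
        apply Summable.of_nonneg_of_le (fun y => ?_) (fun y => ?_) (hsum.prod_symm.prod)
        · split
          · exact mul_nonneg (hμYnn _) (tsum_nonneg fun x =>
              le_min (hμXnn x) (div_nonneg (h0 _) (hμYnn _)))
          · exact le_rfl
        · split
          case isTrue hy =>
            calc μY y * similarity μX (fun x => μ (x, y) / μY y)
                ≤ μY y * ∑' x, μ (x, y) / μY y := by
                  apply mul_le_mul_of_nonneg_left ?_ (hμYnn y)
                  refine Summable.tsum_le_tsum (fun x => min_le_right _ _) ?_ ((hsx y).div_const _)
                  exact Summable.of_nonneg_of_le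
                    (fun x => le_min (hμXnn x) (div_nonneg (h0 _) (hμYnn y)))
                    (fun x => min_le_right _ _) ((hsx y).div_const _)
              _ = ∑' x, μ (x, y) := by
                  rw [tsum_div_const]; field_simp
          case isFalse hy =>
            exact tsum_nonneg fun x => h0 _
end
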